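/- arXiv:1311.3745 — 7 statements merged into one kernel-verified Lean document; each statement's English description precedes it below -/
import Mathlib

section
/- Let (X,Y,R,Ř,Π) be a reduced root datum such that the fundamental weights ω_α (α ∈ Π) all lie in X, and let Y' ⊆ Y be the subgroup generated by the coroots Ř. Define p : Y → Y' by p(y) = Σ_{α∈Π} ⟨ω_α, y⟩·α̌. Then p(y') = y' for every y' ∈ Y', and p is W-equivariant: p(w·y) = w·p(y) for every w ∈ W and y ∈ Y, where W acts on Y by dual reflections. In particular p is a W-equivariant split surjection of Y onto Y'. -/
/-- A reduced root datum. -/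
structure RRDatum (X Y : Type*) [AddCommGroup X] [AddCommGroup Y] where
  pair : X →+ Y →+ ℤ
  perfL : Function.Bijective fun x : X => pair x
  perfR : Function.Bijective fun y : Y => pair.flip y
  R : Finset X
  coroot : X → Y
  coroot_injOn : Set.InjOn coroot ↑R
  pair_self : ∀ α ∈ R, pair α (coroot α) = 2
  refl_mem : ∀ α ∈ R, ∀ β ∈ R, β - pair β (coroot α) • α ∈ R
  corefl_mem : ∀ α ∈ R, ∀ β ∈ R, coroot β - pair α (coroot β) • coroot α ∈ coroot '' ↑R
  isReduced : ∀ α ∈ R, ∀ n : ℤ, n • α ∈ R → n = 1 ∨ n = -1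
  base : Finset X
  base_sub : base ⊆ R
  base_indep : LinearIndependent ℤ (fun a : {x : X // x ∈ base} => (a : X))
  base_span : ∀ β ∈ R, (∃ c : X → ℕ, (β : X) = ∑ a ∈ base, (c a : ℤ) • a) ∨
      (∃ c : X → ℕ, (β : X) = -∑ a ∈ base, (c a : ℤ) • a)

namespace RRDatum

variable {X Y : Type*} [AddCommGroup X] [AddCommGroup Y] (D : RRDatum X Y)

/-- The reflection associated to a root. -/
def refl (α : X) : X → X := fun x => x - D.pair x (D.coroot α) • α

lemma refl_involutive {α : X} (hα : α ∈ D.R) : Function.Involutive (D.refl α) := by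
  intro x
  simp only [refl, map_sub, map_zsmul, AddMonoidHom.sub_apply, AddMonoidHom.smul_apply,
    D.pair_self α hα, smul_eq_mul]
  rw [sub_smul]
  simp [mul_comm, two_mul, sub_smul, add_smul]

/-- The reflection as an additive automorphism. -/
def reflAut {α : X} (hα : α ∈ D.R) : X ≃+ X where
  toFun := D.refl α
  invFun := D.refl α
  left_inv := D.refl_involutive hα
  right_inv := D.refl_involutive hα
  map_add' x y := by
    simp only [refl, map_add, AddMonoidHom.add_apply, add_smul]
    abel

/-- The element of the Weyl group given by a word in simple reflections; the head of
the list is applied first, i.e. `word [α₁, …, αₙ] = s_{αₙ} ∘ ⋯ ∘ s_{α₁}`. -/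
def word (l : List X) : X → X := l.foldr (fun α f => f ∘ D.refl α) id

/-- The length of an element of the Weyl group with respect to the simple reflections. -/
noncomputable def len (w : X → X) : ℕ :=
  sInf {n | ∃ l : List X, (∀ α ∈ l, α ∈ D.base) ∧ l.length = n ∧ D.word l = w}

end RRDatum

/-- The dual reflection `s_α̌ : Y → Y`, `y ↦ y − ⟨α, y⟩α̌`. -/
def RRDatum.corefl {X Y : Type*} [AddCommGroup X] [AddCommGroup Y] (D : RRDatum X Y)
    (α : X) : Y → Y := fun y => y - D.pair α y • D.coroot α

/-!
Everything rests on `⟨γ, p y⟩ = ⟨γ, y⟩` for every simple root `γ`, i.e. on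
`γ = Σ_α ⟨γ, α̌⟩ ω_α`: since each `ω_α` lies in the `ℚ`-span of the simple roots while
`⟨ω_α, β̌⟩ = δ_{αβ}`, the Cartan matrix is invertible over `ℚ` and this expansion follows.
As `p` also fixes the simple coroots, it commutes with every simple dual reflection, hence with `W`.
For `y ∈ Y'`, the element `p y - y` lies in `Y'` and pairs to zero with every root, so it vanishes
because the coroot form `Σ_β ⟨β, -⟩²` is anisotropic on the span of the coroots.
-/

section DualFamily

variable {X Y ι : Type*} [AddCommGroup X] [AddCommGroup Y] [Fintype ι] [DecidableEq ι]

open Matrix in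
/- Writing `n i • ω i = ∑ j, A i j • e j`, one gets `A * C = diagonal n` for the Cartan matrix
`C j i = B (e j) (ě i)`; hence `det A ≠ 0`, and `A` can be cancelled from
`A *ᵥ (C *ᵥ v) = A *ᵥ u`, where `u j = B (e j) y` and `v i = B (ω i) y`. -/
lemma pair_eq_sum_pair_mul_pair (B : X →+ Y →+ ℤ) (e ω : ι → X) (ě : ι → Y)
    (hω : ∀ i j, B (ω i) (ě j) = if i = j then 1 else 0)
    (hspan : ∀ i, ∃ n : ℤ, n ≠ 0 ∧ n • ω i ∈ Submodule.span ℤ (Set.range e))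
    (k : ι) (y : Y) :
    B (e k) y = ∑ i, B (e k) (ě i) * B (ω i) y := by
  choose n hn hmem using hspan
  choose A hA using fun i => (Submodule.mem_span_range_iff_exists_fun ℤ).1 (hmem i)
  let A : Matrix ι ι ℤ := A
  let C : Matrix ι ι ℤ := fun j i => B (e j) (ě i)
  have hAu : ∀ y, A *ᵥ (fun j => B (e j) y) = fun i => n i * B (ω i) y := by
    intro y
    ext i
    simpa [mulVec, dotProduct] using congrArg (fun x => B x y) (hA i)
  have hAC : A * C = diagonal n := by
    ext i j
    rw [mul_apply, diagonal_apply]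
    simpa [mulVec, dotProduct, hω] using congrFun (hAu (ě j)) i
  have hdet : A.det ≠ 0 := by
    intro h
    have := congrArg det hAC
    rw [det_mul, h, zero_mul, det_diagonal, eq_comm] at this
    exact Finset.prod_ne_zero_iff.mpr (fun i _ => hn i) this
  have hCv : C *ᵥ (fun i => B (ω i) y) = fun j => B (e j) y := by
    refine sub_eq_zero.mp (eq_zero_of_mulVec_eq_zero hdet ?_)
    ext i
    simp [mulVec_sub, mulVec_mulVec, hAC, hAu, mulVec_diagonal]
  simpa [mulVec, dotProduct, C] using (congrFun hCv k).symm

end DualFamily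

namespace RRDatum

variable {X Y : Type*} [AddCommGroup X] [AddCommGroup Y] (D : RRDatum X Y)

section RootPairing

def pairing : X →ₗ[ℤ] Y →ₗ[ℤ] ℤ :=
  (addMonoidHomLequivInt ℤ).toLinearMap ∘ₗ D.pair.toIntLinearMap

@[simp] lemma pairing_apply (x : X) (y : Y) : D.pairing x y = D.pair x y := rfl

instance : D.pairing.IsPerfPair where
  bijective_left := (addMonoidHomLequivInt ℤ).bijective.comp D.perfL
  bijective_right := (addMonoidHomLequivInt ℤ).bijective.comp D.perfR

lemma isTorsionFree (D : RRDatum X Y) : Module.IsTorsionFree ℤ X :=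
  Function.Injective.moduleIsTorsionFree D.pairing
    ((addMonoidHomLequivInt ℤ).injective.comp D.perfL.injective) (map_zsmul D.pairing)

/- The axioms of `RRDatum` only say that `s_α̌ β̌` is some coroot; `RootPairing.mk'` shows that it
is the coroot of `s_α β`. -/
noncomputable def toRootPairing : RootPairing D.R ℤ X Y :=
  haveI := D.isTorsionFree
  RootPairing.mk' D.pairing ⟨Subtype.val, Subtype.val_injective⟩
    ⟨fun β => D.coroot β, fun β γ h => Subtype.ext (D.coroot_injOn β.2 γ.2 h)⟩
    (fun β => D.pair_self β β.2)
    (by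
      rintro β _ ⟨γ, rfl⟩
      exact ⟨⟨_, D.refl_mem β β.2 γ γ.2⟩, rfl⟩)
    (by
      rintro β _ ⟨γ, rfl⟩
      obtain ⟨δ, hδ, h⟩ := D.corefl_mem β β.2 γ γ.2
      exact ⟨⟨δ, hδ⟩, h⟩)

@[simp] lemma toRootPairing_root (β : D.R) : D.toRootPairing.root β = β := rfl

@[simp] lemma toRootPairing_coroot (β : D.R) : D.toRootPairing.coroot β = D.coroot β := rfl

@[simp] lemma toRootPairing_toLinearMap : D.toRootPairing.toLinearMap = D.pairing := rfl

lemma eq_zero_of_mem_closure_coroot_of_forall_pair_eq_zero {z : Y}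
    (hz : z ∈ AddSubgroup.closure (D.coroot '' D.R)) (h : ∀ β ∈ D.R, D.pair β z = 0) :
    z = 0 := by
  have hspan : z ∈ D.toRootPairing.corootSpan ℤ := by
    rw [RootPairing.corootSpan, ← Submodule.mem_toAddSubgroup,
      Submodule.span_int_eq_addSubgroupClosure]
    convert hz
    ext y
    simp
  have hker : z ∈ LinearMap.ker D.toRootPairing.CorootForm := by
    ext w
    simp [RootPairing.corootForm_apply_apply, RootPairing.root', h _ (Subtype.prop _)]
  exact Submodule.disjoint_def.mp D.toRootPairing.disjoint_corootSpan_ker_corootForm z hspan hker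

end RootPairing

lemma span_root_le_span_base : Submodule.span ℤ (D.R : Set X) ≤ Submodule.span ℤ D.base := by
  rw [Submodule.span_le]
  intro β hβ
  have hsum : ∀ c : X → ℕ, ∑ a ∈ D.base, (c a : ℤ) • a ∈ Submodule.span ℤ (D.base : Set X) :=
    fun c => Submodule.sum_mem _ fun a ha => Submodule.smul_mem _ _ (Submodule.subset_span ha)
  rcases D.base_span β hβ with ⟨c, rfl⟩ | ⟨c, rfl⟩
  · exact hsum c
  · exact neg_mem (hsum c)

def weightProj (ω : X → X) : Y →+ Y :=
  ∑ α ∈ D.base, (zmultiplesHom Y (D.coroot α)).comp (D.pair (ω α))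

lemma weightProj_apply (ω : X → X) (y : Y) :
    D.weightProj ω y = ∑ α ∈ D.base, D.pair (ω α) y • D.coroot α := by
  simp [weightProj]

lemma weightProj_mem_closure_coroot (ω : X → X) (y : Y) :
    D.weightProj ω y ∈ AddSubgroup.closure (D.coroot '' D.R) := by
  rw [weightProj_apply]
  exact AddSubgroup.sum_mem _ fun α hα => AddSubgroup.zsmul_mem _
    (AddSubgroup.subset_closure (Set.mem_image_of_mem _ (D.base_sub hα))) _

section FundamentalWeights

variable {D} [DecidableEq X] {ω : X → X}
  (hω : ∀ α ∈ D.base, ∀ β ∈ D.base, D.pair (ω α) (D.coroot β) = if α = β then 1 else 0)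
include hω

lemma weightProj_coroot {γ : X} (hγ : γ ∈ D.base) :
    D.weightProj ω (D.coroot γ) = D.coroot γ := by
  rw [weightProj_apply, Finset.sum_eq_single_of_mem γ hγ]
  · simp [hω γ hγ γ hγ]
  · intro α hα hne
    simp [hω α hα γ hγ, hne]

variable (hωspan : ∀ α ∈ D.base, ∃ n : ℤ, n ≠ 0 ∧ n • ω α ∈ Submodule.span ℤ (D.R : Set X))
include hωspan

lemma pair_weightProj {γ : X} (hγ : γ ∈ D.base) (y : Y) :
    D.pair γ (D.weightProj ω y) = D.pair γ y := by
  have key := pair_eq_sum_pair_mul_pair D.pair (Subtype.val : D.base → X) (fun α => ω α)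
    (fun α => D.coroot α) (fun α β => by simp only [hω α α.2 β β.2, Subtype.ext_iff])
    (fun α => (hωspan α α.2).imp fun n ⟨hn, hmem⟩ =>
      ⟨hn, by simpa using D.span_root_le_span_base hmem⟩) ⟨γ, hγ⟩ y
  rw [key, weightProj_apply, map_sum, ← Finset.sum_coe_sort D.base]
  simp only [map_zsmul, smul_eq_mul, mul_comm]

lemma pair_root_weightProj {β : X} (hβ : β ∈ D.R) (y : Y) :
    D.pair β (D.weightProj ω y) = D.pair β y :=
  LinearMap.eqOn_span (f := D.pairing.flip (D.weightProj ω y)) (g := D.pairing.flip y)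
    (fun _ hγ => pair_weightProj hω hωspan hγ y)
    (D.span_root_le_span_base (Submodule.subset_span hβ))

lemma weightProj_eq_self {y : Y} (hy : y ∈ AddSubgroup.closure (D.coroot '' D.R)) :
    D.weightProj ω y = y := by
  refine sub_eq_zero.mp (D.eq_zero_of_mem_closure_coroot_of_forall_pair_eq_zero
    (sub_mem (D.weightProj_mem_closure_coroot ω y) hy) fun β hβ => ?_)
  rw [map_sub, pair_root_weightProj hω hωspan hβ, sub_self]

lemma weightProj_corefl {γ : X} (hγ : γ ∈ D.base) (y : Y) :
    D.weightProj ω (D.corefl γ y) = D.corefl γ (D.weightProj ω y) := by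
  simp only [corefl, map_sub, map_zsmul, weightProj_coroot hω hγ, pair_weightProj hω hωspan hγ]

lemma weightProj_comm_of_mem_closure {w : AddAut Y}
    (hw : w ∈ AddSubgroup.closure {w : AddAut Y | ∃ α ∈ D.base, ⇑w = D.corefl α}) (y : Y) :
    D.weightProj ω (w y) = w (D.weightProj ω y) := by
  induction hw using AddSubgroup.closure_induction generalizing y with
  | mem w hw =>
    obtain ⟨γ, hγ, hwγ⟩ := hw
    rw [hwγ, weightProj_corefl hω hωspan hγ]
  | zero => rfl
  | add w v _ _ ihw ihv => exact (ihw (v y)).trans (congrArg w (ihv y))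
  | neg w _ ihw =>
    apply w.injective
    rw [← ihw]
    simp

end FundamentalWeights

end RRDatum

/-- If the fundamental weights all lie in `X` and `Y'` is the subgroup of `Y`
generated by the coroots, then `p : Y → Y'`, `p(y) = Σ_{α∈Π} ⟨ω_α, y⟩·α̌`, satisfies
`p(y') = y'` for `y' ∈ Y'`, is `W`-equivariant for the dual action of the Weyl group on `Y`,
and takes values in `Y'`; in particular it is a `W`-equivariant split surjection onto `Y'`. -/
theorem fundamental_weight_projection
    {X Y : Type*} [AddCommGroup X] [AddCommGroup Y] (D : RRDatum X Y)
    (ω : X → X)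
    -- each `ω α` lies in the `ℚ`-span of the roots …
    (hωspan : ∀ α ∈ D.base, ∃ nz : ℤ, nz ≠ 0 ∧
        nz • ω α ∈ Submodule.span ℤ (↑D.R : Set X))
    -- … and satisfies `⟨ω_α, β̌⟩ = δ_{α,β}` for all simple `β`:
    (hω : ∀ α ∈ D.base, ∀ β ∈ D.base,
        (β = α → D.pair (ω α) (D.coroot β) = 1) ∧
        (β ≠ α → D.pair (ω α) (D.coroot β) = 0))
    (Y' : AddSubgroup Y) (hY' : Y' = AddSubgroup.closure (D.coroot '' ↑D.R))
    (W : AddSubgroup (AddAut Y))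
    (hW : W = AddSubgroup.closure {w : AddAut Y | ∃ α ∈ D.base, ⇑w = D.corefl α})
    (p : Y → Y) (hp : ∀ y, p y = ∑ α ∈ D.base, D.pair (ω α) y • D.coroot α) :
    (∀ y ∈ Y', p y = y) ∧
    (∀ w ∈ W, ∀ y : Y, p (w y) = w (p y)) ∧
    (∀ y : Y, p y ∈ Y') := by
  classical
  subst hY' hW
  obtain rfl : p = D.weightProj ω := funext fun y => (hp y).trans (D.weightProj_apply ω y).symm
  have hδ : ∀ α ∈ D.base, ∀ β ∈ D.base,
      D.pair (ω α) (D.coroot β) = if α = β then 1 else 0 := by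
    intro α hα β hβ
    split_ifs with h
    · exact (hω α hα β hβ).1 h.symm
    · exact (hω α hα β hβ).2 (Ne.symm h)
  exact ⟨fun y hy => RRDatum.weightProj_eq_self hδ hωspan hy,
    fun w hw y => RRDatum.weightProj_comm_of_mem_closure hδ hωspan hw y,
    D.weightProj_mem_closure_coroot ω⟩
end

section
/- Let R be an associative unital ring, e ∈ R an idempotent, and N a left R-module which is generated as an R-module by eN and such that eN is a simple left eRe-module (in particular eN ≠ 0). Then the sum U of all R-submodules U' ⊆ N with eU' = 0 is the unique maximal proper R-submodule of N. Consequently N has a unique simple quotient L = N/U, and eL is isomorphic to eN as eRe-modules. -/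
/-- Let `R` be an associative unital ring, `e ∈ R` an idempotent and `N` a
left `R`-module generated by `eN`, such that `eN` is a simple `eRe`-module. Then the sum `U`
of all submodules `U' ⊆ N` with `eU' = 0` is the unique maximal proper submodule of `N`;
consequently `N` has a unique simple quotient `L = N ⧸ U`, and the quotient map restricts to
an `eRe`-module isomorphism of `eN` onto `eL`. -/
theorem unique_simple_quotient_of_corner_generation
    {R N : Type*} [Ring R] [AddCommGroup N] [Module R N]
    (e : R) (he : e * e = e)
    -- `N` is generated by `eN`:
    (hgen : Submodule.span R {v : N | ∃ m : N, v = e • m} = ⊤)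
    -- `eN` is a simple `eRe`-module (nonzero, and every nonzero element generates):
    (hnz : ∃ v : N, e • v ≠ 0)
    (hsimple : ∀ v w : N, e • v ≠ 0 → ∃ r : R, (e * r * e) • (e • v) = e • w) :
    letI U : Submodule R N := sSup {U' : Submodule R N | ∀ u ∈ U', e • u = 0}
    U ≠ ⊤ ∧
    (∀ U'' : Submodule R N, U'' ≠ ⊤ → U'' ≤ U) ∧
    IsSimpleModule R (N ⧸ U) ∧
    Set.InjOn U.mkQ {v : N | ∃ m : N, v = e • m} ∧
    {v : N ⧸ U | ∃ m : N ⧸ U, v = e • m} = U.mkQ '' {v : N | ∃ m : N, v = e • m} := by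
  set U : Submodule R N := sSup {U' : Submodule R N | ∀ u ∈ U', e • u = 0} with hUdef
  -- The largest submodule annihilated by `e`.
  set K : Submodule R N :=
    { carrier := {u | ∀ r : R, e • r • u = 0}
      add_mem' := by
        intro a b ha hb r
        rw [smul_add, smul_add, ha, hb, add_zero]
      zero_mem' := by intro r; simp
      smul_mem' := by
        intro s u hu r
        rw [smul_smul r s u]
        exact hu (r * s) } with hKdef
  have hUK : U = K := by
    apply le_antisymm
    · apply sSup_le
      intro U' hU' u hu r
      exact hU' (r • u) (U'.smul_mem r hu)
    · apply le_sSup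
      intro u hu
      have := hu 1
      simpa using this
  have hU0 : ∀ u ∈ U, e • u = 0 := by
    intro u hu
    have : u ∈ K := hUK ▸ hu
    simpa using this 1
  -- U ≠ ⊤
  have hUne : U ≠ ⊤ := by
    intro h
    obtain ⟨v, hv⟩ := hnz
    exact hv (hU0 v (h ▸ Submodule.mem_top))
  -- maximality
  have hmax : ∀ U'' : Submodule R N, U'' ≠ ⊤ → U'' ≤ U := by
    intro U'' hne
    by_contra hle
    apply hne
    rw [hUK] at hle
    obtain ⟨u, hu, hnk⟩ := Set.not_subset.mp hle
    have hnk' : ¬ ∀ r : R, e • r • u = 0 := hnk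
    push_neg at hnk'
    obtain ⟨r, hr⟩ := hnk' 
    set w := r • u with hw
    have hwU : w ∈ U'' := U''.smul_mem r hu
    have hew : e • w ≠ 0 := hr
    rw [eq_top_iff, ← hgen, Submodule.span_le]
    rintro v ⟨m, rfl⟩
    obtain ⟨s, hs⟩ := hsimple w m hew
    have : (e * s * e) • (e • w) = ((e * s * e) * e) • w := by rw [smul_smul]
    rw [this, mul_assoc, he] at hs
    rw [← hs]
    exact U''.smul_mem _ hwU
  have hcoatom : IsCoatom U := by
    constructor
    · exact hUne
    · intro W hW
      by_contra h
      exact absurd (hmax W h) (not_le_of_gt hW)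
  refine ⟨hUne, hmax, isSimpleModule_iff_isCoatom.mpr hcoatom, ?_, ?_⟩
  · rintro a ⟨m, rfl⟩ b ⟨m', rfl⟩ h
    have hmem : e • m - e • m' ∈ U := (Submodule.Quotient.eq U).mp h
    have h0 : e • (e • m - e • m') = 0 := hU0 _ hmem
    rw [smul_sub, smul_smul, smul_smul, he] at h0
    exact sub_eq_zero.mp h0
  · ext v
    constructor
    · rintro ⟨mbar, rfl⟩
      obtain ⟨m, rfl⟩ := U.mkQ_surjective mbar
      exact ⟨e • m, ⟨m, rfl⟩, (map_smul U.mkQ e m).symm⟩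
    · rintro ⟨x, ⟨m, rfl⟩, rfl⟩
      exact ⟨U.mkQ m, (map_smul U.mkQ e m).symm⟩
end

section
/- Let R be an associative unital ring and e ∈ R an idempotent. If V and V' are simple left R-modules with eV ≠ 0 and eV' ≠ 0, and eV is isomorphic to eV' as left eRe-modules, then V is isomorphic to V' as left R-modules. -/
/-- Let `R` be an associative unital ring and `e ∈ R` an idempotent. If `V`
and `V'` are simple left `R`-modules with `eV ≠ 0 ≠ eV'` which become isomorphic over the
corner ring `eRe` (i.e. there is a bijection of `eV` onto `eV'` which is additive and
commutes with the action of the elements `ere`), then `V ≅ V'` as `R`-modules. -/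
theorem simple_modules_iso_of_corner_iso
    {R V V' : Type*} [Ring R]
    [AddCommGroup V] [Module R V] [AddCommGroup V'] [Module R V']
    (e : R) (he : e * e = e)
    [IsSimpleModule R V] [IsSimpleModule R V']
    (hV : ∃ v : V, e • v ≠ 0) (hV' : ∃ v : V', e • v ≠ 0)
    (φ : V → V')
    (hbij : Set.BijOn φ {v : V | ∃ m : V, v = e • m} {v : V' | ∃ m : V', v = e • m})
    (hadd : ∀ v w : V, φ (e • v + e • w) = φ (e • v) + φ (e • w))
    (hsmul : ∀ (r : R) (v : V), φ ((e * r * e) • (e • v)) = (e * r * e) • φ (e • v)) :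
    Nonempty (V ≃ₗ[R] V') := by
  classical
  obtain ⟨v₀, hv₀⟩ := hV
  set u : V := e • v₀ with hu
  have hu0 : u ≠ 0 := hv₀
  -- φ 0 = 0
  have hφ0 : φ 0 = 0 := by
    have h := hadd 0 0
    simp only [smul_zero, add_zero] at h
    exact (left_eq_add.mp h)
  -- φ u ∈ eV'
  have hmem : φ u ∈ {v : V' | ∃ m : V', v = e • m} := hbij.mapsTo ⟨v₀, rfl⟩
  obtain ⟨m', hm'⟩ := hmem
  have heφu : e • φ u = φ u := by rw [hm', smul_smul, he]
  have heu : e • v₀ = u := rfl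
  -- key: annihilator inclusion
  have hker : ∀ r : R, r • u = 0 → r • φ u = 0 := by
    intro r hr
    by_contra hne
    have hφune : φ u ≠ 0 := fun h => hne (by rw [h, smul_zero])
    have hspan : Submodule.span R {r • φ u} = ⊤ :=
      IsSimpleModule.span_singleton_eq_top R hne
    have : φ u ∈ Submodule.span R ({r • φ u} : Set V') := by
      rw [hspan]; trivial
    rw [Submodule.mem_span_singleton] at this
    obtain ⟨s, hs⟩ := this
    have key := hsmul (s * r) v₀
    have hL : (e * (s * r) * e) • (e • v₀) = 0 := by
      rw [heu, mul_smul, mul_smul, mul_smul, smul_smul e e, he, ← hu, hr,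
        smul_zero, smul_zero]
    have hR : (e * (s * r) * e) • φ (e • v₀) = φ u := by
      rw [heu, mul_smul, mul_smul, mul_smul, heφu, hs, heφu]
    rw [heu, hL, hR, hφ0] at key
    exact hφune key.symm
  -- build the linear map
  have hsurj := IsSimpleModule.toSpanSingleton_surjective R hu0
  set g : R →ₗ[R] V := LinearMap.toSpanSingleton R V u with hg
  set g' : R →ₗ[R] V' := LinearMap.toSpanSingleton R V' (φ u) with hg'
  have hle : LinearMap.ker g ≤ LinearMap.ker g' := by
    intro r hr
    rw [LinearMap.mem_ker] at hr ⊢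
    exact hker r hr
  set E : (R ⧸ LinearMap.ker g) ≃ₗ[R] V := g.quotKerEquivOfSurjective hsurj with hE
  set f : V →ₗ[R] V' :=
    (Submodule.liftQ (LinearMap.ker g) g' hle).comp E.symm.toLinearMap with hf
  have hEmk : ∀ r : R, E (Submodule.Quotient.mk r) = r • u := fun r => rfl
  have hfu : f u = φ u := by
    have h1 : E (Submodule.Quotient.mk (1 : R)) = u := by rw [hEmk]; simp
    have h2 : E.symm u = Submodule.Quotient.mk (1 : R) := by
      rw [← h1, LinearEquiv.symm_apply_apply]
    simp only [hf, LinearMap.comp_apply, LinearEquiv.coe_toLinearMap, h2,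
      Submodule.liftQ_apply]
    simp [hg', LinearMap.toSpanSingleton_apply]
  have hfne : f ≠ 0 := by
    intro h
    have hφune : φ u ≠ 0 := by
      intro h0
      have : u = 0 := hbij.injOn ⟨v₀, rfl⟩ ⟨0, (smul_zero e).symm⟩ (by rw [h0, hφ0])
      exact hu0 this
    apply hφune
    rw [← hfu, h, LinearMap.zero_apply]
  exact ⟨LinearEquiv.ofBijective f (f.bijective_or_eq_zero.resolve_right hfne)⟩
end

section
/- Let k be a field, X a finitely generated free abelian group, A = S_k(X) the symmetric algebra of X over k, and α ∈ X, α̌ ∈ Hom(X,ℤ) with ⟨α,α̌⟩ = 2; let s_α be the k-algebra automorphism of A induced by x ↦ x − ⟨x,α̌⟩α, and Δ_α : A → A the unique map with α·Δ_α(f) = f − s_α(f) for all f ∈ A. Let V be a finite-dimensional k-vector space, ρ : A → End_k(V) a k-algebra homomorphism, c ∈ k, and T ∈ End_k(V) an operator satisfying T∘ρ(f) − ρ(s_α(f))∘T = c·ρ(Δ_α(f)) for all f ∈ A. If λ : A → k is a k-algebra homomorphism with λ∘s_α = λ, then T maps the generalized weight space V_λ into itself. -/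
open scoped BigOperators

/-- The embedding of the free abelian group `X = (Fin n → ℤ)` into its symmetric algebra
`S_k(X) = k[X_1,…,X_n]` over `k`. -/
noncomputable def symEmb (k : Type*) [Field k] (n : ℕ) (x : Fin n → ℤ) :
    MvPolynomial (Fin n) k :=
  ∑ i, x i • MvPolynomial.X i

/-- The generalized weight space of a weight `lam : A → k` in a representation
`ρ : A → End_k(V)`. -/
def genWt {k V A : Type*} [Field k] [AddCommGroup V] [Module k V]
    [CommRing A] [Algebra k A]
    (ρ : A →ₐ[k] Module.End k V) (lam : A →ₐ[k] k) : Set V :=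
  {v | ∀ f : A, ∃ m : ℕ, ((ρ f - lam f • (1 : Module.End k V)) ^ m) v = 0}

private lemma pow_mul_of_rel {R : Type*} [Ring R] {b t cc d : R} (h : b * t = t * cc - d)
    (m : ℕ) : b ^ m * t = t * cc ^ m - ∑ j ∈ Finset.range m, b ^ (m - 1 - j) * d * cc ^ j := by
  induction m with
  | zero => simp
  | succ m ih =>
    rw [pow_succ', mul_assoc, ih, mul_sub, Finset.mul_sum, Finset.sum_range_succ]
    have h1 : ∀ j ∈ Finset.range m, b * (b ^ (m - 1 - j) * d * cc ^ j)
        = b ^ (m + 1 - 1 - j) * d * cc ^ j := by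
      intro j hj
      rw [Finset.mem_range] at hj
      rw [← mul_assoc, ← mul_assoc, ← pow_succ']
      have : m - 1 - j + 1 = m + 1 - 1 - j := by omega
      rw [this]
    rw [Finset.sum_congr rfl h1, ← mul_assoc, h, sub_mul, mul_assoc, ← pow_succ']
    have h2 : (m + 1 - 1 - m) = 0 := by omega
    rw [h2, pow_zero, one_mul]
    abel

/-- With `A = S_k(X)` the symmetric algebra of a finitely generated free
abelian group `X`, `α ∈ X`, `α̌ ∈ Hom(X,ℤ)` with `⟨α,α̌⟩ = 2`, `s_α` the induced algebra
automorphism of `A`, `Δ_α` the BGG operator, and `T` an operator on a finite dimensional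
representation `V` of `A` satisfying `T∘ρ(f) − ρ(s_α f)∘T = c·ρ(Δ_α f)`: if `λ : A → k` is an
algebra map with `λ∘s_α = λ`, then `T` preserves the generalized weight space `V_λ`. -/
theorem bgg_commutation_fixed_weight
    {k : Type*} [Field k] (n : ℕ)
    (α : Fin n → ℤ) (acheck : (Fin n → ℤ) →+ ℤ) (h2 : acheck α = 2)
    (s : MvPolynomial (Fin n) k ≃ₐ[k] MvPolynomial (Fin n) k)
    (hs : ∀ x : Fin n → ℤ, s (symEmb k n x) = symEmb k n (x - acheck x • α))
    (Δ : MvPolynomial (Fin n) k → MvPolynomial (Fin n) k)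
    (hΔ : ∀ f, symEmb k n α * Δ f = f - s f)
    {V : Type*} [AddCommGroup V] [Module k V] [FiniteDimensional k V]
    (ρ : MvPolynomial (Fin n) k →ₐ[k] Module.End k V)
    (c : k) (T : Module.End k V)
    (hT : ∀ f, T * ρ f - ρ (s f) * T = c • ρ (Δ f))
    (lam : MvPolynomial (Fin n) k →ₐ[k] k)
    (hlam : lam.comp s.toAlgHom = lam) :
    ∀ v ∈ genWt ρ lam, T v ∈ genWt ρ lam := by
  intro v hv f
  set f' := s.symm f with hf'
  have hsf' : s f' = f := s.apply_symm_apply f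
  have hlf : lam f = lam f' := by
    conv_lhs => rw [← hsf']
    exact AlgHom.congr_fun hlam f'
  set B : Module.End k V := ρ f - lam f • 1 with hB
  set C : Module.End k V := ρ f' - lam f' • 1 with hC
  set D : Module.End k V := c • ρ (Δ f') with hD
  -- basic commutation facts
  have hcomm : ∀ a b : MvPolynomial (Fin n) k, Commute (ρ a) (ρ b) := fun a b => by
    unfold Commute SemiconjBy
    rw [← map_mul, ← map_mul, mul_comm]
  have hone : ∀ (E : Module.End k V) (a : k), Commute E (a • (1 : Module.End k V)) :=
    fun E a => (Commute.one_right E).smul_right a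
  have hBρ : ∀ g, Commute B (ρ g) := fun g =>
    ((hcomm f g).sub_left ((hone (ρ g) (lam f)).symm))
  have hBC : Commute B C := (hBρ f').sub_right (hone B (lam f'))
  have hBD : Commute B D := (hBρ (Δ f')).smul_right c
  -- the key relation  B * T = T * C - D
  have hrelρ : ρ f * T = T * ρ f' - D := by
    have h := hT f'
    rw [hsf', ← hD] at h
    rw [← h]
    abel
  have hrel : B * T = T * C - D := by
    rw [hB, hC, sub_mul, mul_sub, hrelρ, smul_mul_assoc, one_mul, mul_smul_comm, mul_one, hlf]
    abel
  obtain ⟨N, hN⟩ := hv f'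
  obtain ⟨N', hN'⟩ := hv f
  rw [← hC] at hN
  rw [← hB] at hN'
  refine ⟨N + N', ?_⟩
  have key := pow_mul_of_rel hrel (N + N')
  have hTv : (B ^ (N + N')) (T v) = ((B ^ (N + N')) * T) v := rfl
  rw [hTv, key]
  have hCm : (C ^ (N + N')) v = 0 := by
    rw [add_comm, pow_add, Module.End.mul_apply, hN, map_zero]
  have hterm : ∀ j ∈ Finset.range (N + N'),
      ((B ^ (N + N' - 1 - j) * D * C ^ j)) v = 0 := by
    intro j hj
    rw [Finset.mem_range] at hj
    by_cases hjN : j < N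
    · -- use B^{N'} v = 0, commuting it past D * C^j
      have he : N + N' - 1 - j = (N + N' - 1 - j - N') + N' := by omega
      have hcom : Commute (B ^ N') (D * C ^ j) :=
        (hBD.mul_right (hBC.pow_right j)).pow_left N'
      rw [he, pow_add, mul_assoc, mul_assoc, hcom.eq]
      rw [Module.End.mul_apply, Module.End.mul_apply, hN', map_zero, map_zero]
    · -- j ≥ N : use C^N v = 0
      have he : j = (j - N) + N := by omega
      rw [he, pow_add, ← mul_assoc, Module.End.mul_apply, hN, map_zero]
  rw [LinearMap.sub_apply, LinearMap.sum_apply, Finset.sum_eq_zero hterm, Module.End.mul_apply,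
    hCm, map_zero, sub_zero]
end

section
/- Let k be a field, X a finitely generated free abelian group, A = S_k(X) the symmetric algebra of X over k, and α ∈ X, α̌ ∈ Hom(X,ℤ) with ⟨α,α̌⟩ = 2; let s_α be the k-algebra automorphism of A induced by x ↦ x − ⟨x,α̌⟩α, and Δ_α : A → A the unique map with α·Δ_α(f) = f − s_α(f) for all f ∈ A. Let V be a finite-dimensional k-vector space, ρ : A → End_k(V) a k-algebra homomorphism, c ∈ k, and T ∈ End_k(V) an operator satisfying T∘ρ(f) − ρ(s_α(f))∘T = c·ρ(Δ_α(f)) for all f ∈ A. If λ : A → k is a k-algebra homomorphism with λ∘s_α ≠ λ, then λ(α) ≠ 0, T maps the generalized weight space V_λ into V_λ + V_{λ∘s_α}, and more precisely for every v ∈ V_λ one may write Tv = w + u with w ∈ V_λ, u ∈ V_{λ∘s_α}, and ρ(α)(w) = c·v. -/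
open scoped BigOperators

/-!
Fix `f` with `λ(s f) ≠ λ(f)`. Applying the commutation relation to `(s h - λ(s h))^m`, which kills
`v ∈ V_λ`, shows that `(ρ(h) - λ(s h))^m (T v) ∈ V_λ` for every `h`. On `V_λ` the operator
`ρ(f) - λ(s f)` is invertible, so subtracting from `T v` a suitable `w ∈ V_λ` leaves a vector on
which every `ρ(h) - λ(s h)` is nilpotent, i.e. a vector of `V_{λ∘s}`. Finally, applying the
relation to `F = (f - λ f)^r` with `ρ(F) v = 0 = ρ(s F) u` and multiplying by `ρ(α)` gives
`ρ(s F)(ρ(α) w - c v) = 0`, and `ρ(s F)` is injective on `V_λ`.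
-/

open Module End

section GeneralizedWeightSpace

variable {k A V : Type*} [Field k] [CommRing A] [Algebra k A] [AddCommGroup V] [Module k V]
  (ρ : A →ₐ[k] Module.End k V)

def genWtSubmodule (lam : A →ₐ[k] k) : Submodule k V :=
  ⨅ f, (ρ f).maxGenEigenspace (lam f)

variable {ρ}

lemma mem_genWtSubmodule {lam : A →ₐ[k] k} {v : V} :
    v ∈ genWtSubmodule ρ lam ↔ v ∈ genWt ρ lam := by
  simp [genWtSubmodule, genWt]

lemma map_pow_sub_algebraMap (f : A) (e : k) (m : ℕ) :
    ρ ((f - algebraMap k A e) ^ m) = (ρ f - e • 1) ^ m := by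
  rw [map_pow, map_sub, AlgHom.commutes, Algebra.algebraMap_eq_smul_one]

lemma apply_mem_genWtSubmodule {lam : A →ₐ[k] k} (g : A) {v : V}
    (hv : v ∈ genWtSubmodule ρ lam) : ρ g v ∈ genWtSubmodule ρ lam := by
  simp only [genWtSubmodule, Submodule.mem_iInf] at hv ⊢
  exact fun f ↦ mapsTo_maxGenEigenspace_of_comm ((Commute.all f g).map ρ) _ (hv f)

lemma pow_sub_smul_apply_mem_genWtSubmodule {lam : A →ₐ[k] k} (f : A) (e : k) (m : ℕ) {v : V}
    (hv : v ∈ genWtSubmodule ρ lam) : ((ρ f - e • 1) ^ m) v ∈ genWtSubmodule ρ lam := by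
  rw [← map_pow_sub_algebraMap]
  exact apply_mem_genWtSubmodule _ hv

lemma eq_zero_of_pow_sub_smul_apply_eq_zero {lam : A →ₐ[k] k} {v : V}
    (hv : v ∈ genWtSubmodule ρ lam) {f : A} {e : k} (he : e ≠ lam f) {m : ℕ}
    (hm : ((ρ f - e • 1) ^ m) v = 0) : v = 0 :=
  Submodule.disjoint_def.1 ((ρ f).disjoint_genEigenspace he.symm ⊤ ⊤)
    v ((Submodule.mem_iInf _).1 hv f) ((mem_maxGenEigenspace _ _ _).2 ⟨m, hm⟩)

lemma exists_mem_genWtSubmodule_pow_sub_smul_apply_eq [FiniteDimensional k V]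
    {lam : A →ₐ[k] k} {f : A} {e : k} (he : e ≠ lam f) (m : ℕ) {z : V}
    (hz : z ∈ genWtSubmodule ρ lam) :
    ∃ w ∈ genWtSubmodule ρ lam, ((ρ f - e • 1) ^ m) w = z := by
  let P := ((ρ f - e • 1) ^ m).restrict
    fun _ ↦ pow_sub_smul_apply_mem_genWtSubmodule (lam := lam) f e m
  have hP : Function.Injective P := (injective_iff_map_eq_zero P).2 fun w hw ↦
    Subtype.ext (eq_zero_of_pow_sub_smul_apply_eq_zero w.2 he (congrArg Subtype.val hw))
  obtain ⟨w, hw⟩ := LinearMap.injective_iff_surjective.1 hP ⟨z, hz⟩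
  exact ⟨w, w.2, congrArg Subtype.val hw⟩

lemma exists_mem_genWtSubmodule_sub_mem_genWtSubmodule [FiniteDimensional k V]
    {lam μ : A →ₐ[k] k} (hne : μ ≠ lam) {x : V}
    (hx : ∀ h, ∃ m, ((ρ h - μ h • (1 : End k V)) ^ m) x ∈ genWtSubmodule ρ lam) :
    ∃ w ∈ genWtSubmodule ρ lam, x - w ∈ genWtSubmodule ρ μ := by
  obtain ⟨f, hf⟩ := DFunLike.ne_iff.1 hne
  obtain ⟨m, hm⟩ := hx f
  obtain ⟨w, hw, hPw⟩ := exists_mem_genWtSubmodule_pow_sub_smul_apply_eq hf m hm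
  refine ⟨w, hw, (Submodule.mem_iInf _).2 fun h ↦ (mem_maxGenEigenspace _ _ _).2 ?_⟩
  obtain ⟨p, hp⟩ := hx h
  refine ⟨p, eq_zero_of_pow_sub_smul_apply_eq_zero (ρ := ρ) ?_ hf (m := m) ?_⟩
  · rw [map_sub]
    exact sub_mem hp (pow_sub_smul_apply_mem_genWtSubmodule h _ p hw)
  · have hcomm := (Commute.all ((f - algebraMap k A (μ f)) ^ m)
      ((h - algebraMap k A (μ h)) ^ p)).map ρ
    rw [map_pow_sub_algebraMap, map_pow_sub_algebraMap] at hcomm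
    rw [← Module.End.mul_apply, hcomm.eq, Module.End.mul_apply, map_sub, hPw, sub_self, map_zero]

end GeneralizedWeightSpace

section Semilinear

variable {k A V : Type*} [Field k] [CommRing A] [Algebra k A] [AddCommGroup V] [Module k V]
  {ρ : A →ₐ[k] Module.End k V} {σ : A ≃ₐ[k] A} {lam : A →ₐ[k] k}

lemma apply_ne_zero_of_comp_ne {a : A} {D : A → A} (hD : ∀ f, a * D f = f - σ f)
    (hlam : lam.comp σ.toAlgHom ≠ lam) : lam a ≠ 0 := by
  obtain ⟨f, hf⟩ := DFunLike.ne_iff.1 hlam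
  intro ha
  have h := congrArg lam (hD f)
  rw [map_mul, ha, zero_mul, map_sub, eq_comm, sub_eq_zero] at h
  exact hf h.symm

lemma exists_pow_sub_smul_apply_mem_genWtSubmodule (hσ : Function.Involutive σ)
    {T : Module.End k V} (hT : ∀ f, ∃ g, T * ρ f - ρ (σ f) * T = ρ g) {v : V}
    (hv : v ∈ genWtSubmodule ρ lam) (h : A) :
    ∃ m, ((ρ h - lam (σ h) • (1 : End k V)) ^ m) (T v) ∈ genWtSubmodule ρ lam := by
  obtain ⟨m, hm⟩ := (mem_maxGenEigenspace _ _ _).1 ((Submodule.mem_iInf _).1 hv (σ h))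
  obtain ⟨g, hg⟩ := hT ((σ h - algebraMap k A (lam (σ h))) ^ m)
  rw [map_pow σ, map_sub σ, AlgEquiv.commutes, hσ h, map_pow_sub_algebraMap,
    map_pow_sub_algebraMap] at hg
  have hgv := congrArg (· v) hg
  simp only [LinearMap.sub_apply, Module.End.mul_apply, hm, map_zero, zero_sub,
    neg_eq_iff_eq_neg] at hgv
  exact ⟨m, hgv ▸ neg_mem (apply_mem_genWtSubmodule g hv)⟩

lemma exists_apply_eq_add_mem_genWtSubmodule [FiniteDimensional k V]
    (hσ : Function.Involutive σ) {T : Module.End k V}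
    (hT : ∀ f, ∃ g, T * ρ f - ρ (σ f) * T = ρ g) (hlam : lam.comp σ.toAlgHom ≠ lam) {v : V}
    (hv : v ∈ genWtSubmodule ρ lam) :
    ∃ w ∈ genWtSubmodule ρ lam, ∃ u ∈ genWtSubmodule ρ (lam.comp σ.toAlgHom), T v = w + u := by
  obtain ⟨w, hw, hu⟩ := exists_mem_genWtSubmodule_sub_mem_genWtSubmodule hlam
    (exists_pow_sub_smul_apply_mem_genWtSubmodule hσ hT hv)
  exact ⟨w, hw, _, hu, (add_sub_cancel w (T v)).symm⟩

lemma apply_eq_smul_of_apply_eq_add (hσ : Function.Involutive σ) {a : A} {D : A → A}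
    (hD : ∀ f, a * D f = f - σ f) {c : k} {T : Module.End k V}
    (hT : ∀ f, T * ρ f - ρ (σ f) * T = c • ρ (D f)) (hlam : lam.comp σ.toAlgHom ≠ lam)
    {v w u : V} (hv : v ∈ genWtSubmodule ρ lam) (hw : w ∈ genWtSubmodule ρ lam)
    (hu : u ∈ genWtSubmodule ρ (lam.comp σ.toAlgHom)) (hTv : T v = w + u) :
    ρ a w = c • v := by
  obtain ⟨f, hf⟩ := DFunLike.ne_iff.1 hlam
  obtain ⟨r₁, hr₁⟩ := (mem_maxGenEigenspace _ _ _).1 ((Submodule.mem_iInf _).1 hv f)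
  obtain ⟨r₂, hr₂⟩ := (mem_maxGenEigenspace _ _ _).1 ((Submodule.mem_iInf _).1 hu (σ f))
  set F := (f - algebraMap k A (lam f)) ^ (r₁ + r₂)
  have hσF : σ F = (σ f - algebraMap k A (lam f)) ^ (r₁ + r₂) := by
    rw [map_pow σ, map_sub σ, AlgEquiv.commutes]
  have hFv : ρ F v = 0 := by
    rw [map_pow_sub_algebraMap]
    exact pow_map_zero_of_le (Nat.le_add_right r₁ r₂) hr₁
  have hσFu : ρ (σ F) u = 0 := by
    rw [hσF, map_pow_sub_algebraMap]
    simp only [AlgHom.comp_apply, AlgEquiv.coe_toAlgHom, hσ f] at hr₂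
    exact pow_map_zero_of_le (Nat.le_add_left r₂ r₁) hr₂
  have hσFw : ρ (σ F) w = -(c • ρ (D F) v) := by
    have h := congrArg (· v) (hT F)
    simp only [LinearMap.sub_apply, Module.End.mul_apply, LinearMap.smul_apply, hFv, hTv,
      map_zero, map_add, hσFu, add_zero, zero_sub] at h
    rw [← h, neg_neg]
  have key : ρ (σ F) (ρ a w - c • v) = 0 := by
    calc ρ (σ F) (ρ a w - c • v) = ρ a (ρ (σ F) w) - c • ρ (σ F) v := by
          rw [map_sub, map_smul, ← Module.End.mul_apply, ← map_mul, mul_comm, map_mul,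
            Module.End.mul_apply]
      _ = -(c • ρ (a * D F) v) - c • ρ (σ F) v := by
          rw [hσFw, map_neg, map_smul, map_mul, Module.End.mul_apply]
      _ = 0 := by
          rw [hD, map_sub, LinearMap.sub_apply, hFv, zero_sub, smul_neg, neg_neg, sub_self]
  rw [hσF, map_pow_sub_algebraMap] at key
  exact sub_eq_zero.1 (eq_zero_of_pow_sub_smul_apply_eq_zero
    (sub_mem (apply_mem_genWtSubmodule a hw) (Submodule.smul_mem _ c hv)) hf.symm key)

end Semilinear

lemma symEmb_single {k : Type*} [Field k] {n : ℕ} (i : Fin n) :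
    symEmb k n (Pi.single i 1) = MvPolynomial.X i := by
  simp [symEmb, Pi.single_apply]

lemma involutive_of_map_symEmb {k : Type*} [Field k] {n : ℕ} {α : Fin n → ℤ}
    {acheck : (Fin n → ℤ) →+ ℤ} (h2 : acheck α = 2)
    {s : MvPolynomial (Fin n) k ≃ₐ[k] MvPolynomial (Fin n) k}
    (hs : ∀ x : Fin n → ℤ, s (symEmb k n x) = symEmb k n (x - acheck x • α)) :
    Function.Involutive s := by
  have hrefl : ∀ x, (x - acheck x • α) - acheck (x - acheck x • α) • α = x := fun x ↦ by
    rw [map_sub, map_zsmul, h2, smul_eq_mul, mul_two, sub_add_cancel_left, neg_smul,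
      sub_neg_eq_add, sub_add_cancel]
  have hcomp : s.toAlgHom.comp s.toAlgHom = AlgHom.id k _ :=
    MvPolynomial.algHom_ext fun i ↦ by
      simp only [AlgHom.comp_apply, AlgEquiv.coe_toAlgHom, AlgHom.id_apply, ← symEmb_single, hs,
        hrefl]
  exact fun f ↦ AlgHom.congr_fun hcomp f

/-- With `A = S_k(X)`, `α`, `α̌`, `s_α`, `Δ_α`, `ρ`, `c`, `T` as in the
preceding setting: if `λ : A → k` is an algebra map with `λ∘s_α ≠ λ`, then `λ(α) ≠ 0`, and
`T` maps the generalized weight space `V_λ` into `V_λ + V_{λ∘s_α}`; more precisely every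
`v ∈ V_λ` has `Tv = w + u` with `w ∈ V_λ`, `u ∈ V_{λ∘s_α}` and `ρ(α)(w) = c·v`. -/
theorem bgg_commutation_moved_weight
    {k : Type*} [Field k] (n : ℕ)
    (α : Fin n → ℤ) (acheck : (Fin n → ℤ) →+ ℤ) (h2 : acheck α = 2)
    (s : MvPolynomial (Fin n) k ≃ₐ[k] MvPolynomial (Fin n) k)
    (hs : ∀ x : Fin n → ℤ, s (symEmb k n x) = symEmb k n (x - acheck x • α))
    (Δ : MvPolynomial (Fin n) k → MvPolynomial (Fin n) k)
    (hΔ : ∀ f, symEmb k n α * Δ f = f - s f)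
    {V : Type*} [AddCommGroup V] [Module k V] [FiniteDimensional k V]
    (ρ : MvPolynomial (Fin n) k →ₐ[k] Module.End k V)
    (c : k) (T : Module.End k V)
    (hT : ∀ f, T * ρ f - ρ (s f) * T = c • ρ (Δ f))
    (lam : MvPolynomial (Fin n) k →ₐ[k] k)
    (hlam : lam.comp s.toAlgHom ≠ lam) :
    lam (symEmb k n α) ≠ 0 ∧
    ∀ v ∈ genWt ρ lam,
      ∃ w ∈ genWt ρ lam, ∃ u ∈ genWt ρ (lam.comp s.toAlgHom),
        T v = w + u ∧ ρ (symEmb k n α) w = c • v := by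
  have hσ := involutive_of_map_symEmb h2 hs
  refine ⟨apply_ne_zero_of_comp_ne hΔ hlam, fun v hv ↦ ?_⟩
  rw [← mem_genWtSubmodule] at hv
  obtain ⟨w, hw, u, hu, hTv⟩ := exists_apply_eq_add_mem_genWtSubmodule hσ
    (fun f ↦ ⟨c • Δ f, by rw [hT, map_smul]⟩) hlam hv
  exact ⟨w, mem_genWtSubmodule.1 hw, u, mem_genWtSubmodule.1 hu, hTv,
    apply_eq_smul_of_apply_eq_add hσ hΔ hT hlam hv hw hu hTv⟩
end

section
/- Let (X,Y,R,Ř,Π) be a reduced simply connected root datum with Weyl group W, let k be a field, and let c : Π → k∖{0} be parameters such that c_α = c_β whenever the order m_{α,β} of s_αs_β in W is odd. Let λ ∈ Hom_ℤ(X, k) be a weight, with W acting by (w·λ)(x) = λ(w^{−1}x), and assume λ is parabolic, i.e. there exists u ∈ W such that the stabilizer of u·λ in W is generated by the simple reflections fixing u·λ. Then for every sequence α_1, …, α_m of simple roots with s_{α_m}⋯s_{α_1}·λ = λ, the number of indices i ∈ {1,…,m} such that λ(s_{α_1}⋯s_{α_{i−1}}(α_i)) ∈ {c_{α_i}, −c_{α_i}}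 is even. -/
/-- The multiplicative group structure on `AddAut X` (composition), as in the older Mathlib. -/
instance addAutGroupOld (A : Type*) [Add A] : Group (AddAut A) where
  mul g h := AddEquiv.trans h g
  one := AddEquiv.refl _
  inv := AddEquiv.symm
  mul_assoc _ _ _ := rfl
  one_mul _ := rfl
  mul_one _ := rfl
  inv_mul_cancel := AddEquiv.self_trans_symm

/-- The stabilizer, inside the full group of additive automorphisms, of an additive
character `lam : X →+ k`. -/
def addCharStabilizer {X : Type*} [AddCommGroup X] {k : Type*} [Field k]
    (lam : X →+ k) : Subgroup (AddAut X) where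
  carrier := {w | ∀ x, lam (w x) = lam x}
  one_mem' := by intro x; rfl
  mul_mem' := by
    intro a b ha hb x
    have : (a * b) x = a (b x) := rfl
    rw [this, ha, hb]
  inv_mem' := by
    intro a ha x
    have h := ha (a⁻¹ x)
    have h' : a (a⁻¹ x) = x := a.apply_symm_apply x
    rw [h'] at h
    exact h.symm

/-!
For a set `P` of roots stable under `x ↦ -x`, let `N_P(w) ∈ ZMod 2` count the positive roots in
`P` that `w` makes negative. It satisfies the cocycle rule `N_P(w₁ w₂) = N_P(w₂) + N_{w₂ P}(w₁)`,
and for a word `w = s_{α_m} ⋯ s_{α_1}` it counts the indices `i` with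
`s_{α_1} ⋯ s_{α_{i-1}} α_i ∈ P`. Take for `P` the roots `γ` with `λ(γ) = ±c(γ)`, where `c` is
extended `W`-invariantly to the `W`-orbit of the simple roots. This extension is well defined:
if `w α = β` for simple `α, β`, an induction on the length of `w` through minimal coset
representatives for the dihedral subgroups `⟨s_α, s_δ⟩` (Deodhar's argument) links `α` to `β`
through simple roots that are conjugate inside dihedral groups of odd order, on which `c` agrees.

It remains to see `N_P(w) = 0` when `w` fixes `λ`. Then `v = u w u⁻¹` fixes `μ = λ ∘ u⁻¹`, so by
parabolicity `v` is a product of simple reflections `s_δ` fixing `μ`. On the stabilizer of `μ`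
the cocycle `N_{uP}` is a homomorphism, and it vanishes on such an `s_δ`: the fundamental weight
satisfies `s_δ ω_δ = ω_δ - δ`, so `μ(δ) = 0 ≠ ±c_δ`. Conjugating back with the cocycle rule gives
`N_P(w) = N_{uP}(v) = 0`.
-/
theorem odd_orderOf_mul_of_mul_mul_inv_eq {G : Type*} [Group G] {a b g : G} (ha : a * a = 1)
    (hb : b * b = 1) (hg : g ∈ Subgroup.closure {a, b}) (hconj : g * a * g⁻¹ = b) :
    Odd (orderOf (a * b)) := by
  set z := a * b with hz
  have ha' : a⁻¹ = a := inv_eq_of_mul_eq_one_right ha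
  have hb' : b⁻¹ = b := inv_eq_of_mul_eq_one_right hb
  have hb_eq : b = z⁻¹ * a := by rw [hz, mul_inv_rev, ha', hb', mul_assoc, ha, mul_one]
  have ha_zpow : ∀ j : ℤ, a * z ^ j = z ^ (-j) * a := by
    intro j
    have hinv : a * z * a⁻¹ = z⁻¹ := by
      rw [hz, mul_inv_rev, ha', hb', ← mul_assoc, ha, one_mul]
    rw [← mul_inv_eq_iff_eq_mul, ← conj_zpow, hinv, inv_zpow, zpow_neg]
  -- the subgroup generated by `a` and `b` consists of the `z ^ j` and the `z ^ j * a`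
  have hform : ∀ g ∈ Subgroup.closure {a, b}, ∃ j : ℤ, g = z ^ j ∨ g = z ^ j * a := by
    intro g hg
    induction hg using Subgroup.closure_induction with
    | mem x hx =>
      rcases hx with rfl | rfl
      · exact ⟨0, .inr (by simp)⟩
      · exact ⟨-1, .inr (by rw [hb_eq, zpow_neg_one])⟩
    | one => exact ⟨0, .inl (by simp)⟩
    | mul x y _ _ hx hy =>
      obtain ⟨i, rfl | rfl⟩ := hx <;> obtain ⟨j, rfl | rfl⟩ := hy
      · exact ⟨i + j, .inl (zpow_add z i j).symm⟩
      · exact ⟨i + j, .inr (by rw [zpow_add, mul_assoc])⟩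
      · exact ⟨i - j, .inr (by rw [mul_assoc, ha_zpow, ← mul_assoc, ← zpow_add, sub_eq_add_neg])⟩
      · exact ⟨i - j, .inl (by
          rw [mul_assoc, ← mul_assoc a, ha_zpow, mul_assoc, ha, mul_one, ← zpow_add,
            sub_eq_add_neg])⟩
    | inv x _ hx =>
      obtain ⟨j, rfl | rfl⟩ := hx
      · exact ⟨-j, .inl (zpow_neg z j).symm⟩
      · exact ⟨j, .inr (by rw [mul_inv_rev, ha', ← zpow_neg, ha_zpow, neg_neg])⟩
  obtain ⟨j, hj⟩ := hform g hg
  have hconj' : g * a * g⁻¹ = z ^ (j + j) * a := by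
    have : g * a * g⁻¹ = z ^ j * (a * (z ^ j)⁻¹) := by
      rcases hj with rfl | rfl <;> simp only [mul_inv_rev, mul_assoc, mul_inv_cancel_left]
    rw [this, ← zpow_neg, ha_zpow, neg_neg, ← mul_assoc, ← zpow_add]
  rw [hconj, hb_eq] at hconj'
  have hz1 : z ^ (2 * j + 1) = 1 := by
    rw [zpow_add_one, two_mul, ← mul_right_cancel hconj', inv_mul_cancel]
  have hdvd : orderOf z ∣ (2 * j + 1).natAbs :=
    Int.natCast_dvd.1 (orderOf_dvd_iff_zpow_eq_one.2 hz1)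
  exact Odd.of_dvd_nat (Int.natAbs_odd.2 ⟨j, rfl⟩) hdvd

namespace AddAut

variable {A : Type*} [Add A]

@[simp] lemma mul_apply' (g h : AddAut A) (x : A) : (g * h) x = g (h x) := rfl

@[simp] lemma inv_apply_apply (g : AddAut A) (x : A) : g⁻¹ (g x) = x := g.symm_apply_apply x

@[simp] lemma apply_inv_apply (g : AddAut A) (x : A) : g (g⁻¹ x) = x := g.apply_symm_apply x

end AddAut

theorem even_ncard_setOf_iff {ι : Type*} [Fintype ι] (p : ι → Prop) [DecidablePred p] :
    Even {i | p i}.ncard ↔ ∑ i, (if p i then 1 else 0 : ZMod 2) = 0 := by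
  rw [← ZMod.natCast_eq_zero_iff_even, Set.ncard_eq_toFinset_card', Set.toFinset_ofPred,
    Finset.card_filter]
  push_cast
  rfl

namespace RRDatum

variable {X Y : Type*} [AddCommGroup X] [AddCommGroup Y] (D : RRDatum X Y)

/-! ### Reflections and words -/

lemma isAddTorsionFree (D : RRDatum X Y) : IsAddTorsionFree X :=
  Function.Injective.isAddTorsionFree ((AddMonoidHom.coeFn Y ℤ).comp D.pair)
    (DFunLike.coe_injective.comp D.perfL.injective)

lemma ne_zero_of_mem_R {α : X} (hα : α ∈ D.R) : α ≠ 0 := by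
  rintro rfl
  simpa using D.pair_self 0 hα

lemma refl_apply (α x : X) : D.refl α x = x - D.pair x (D.coroot α) • α := rfl

lemma refl_apply_mem {α β : X} (hα : α ∈ D.R) (hβ : β ∈ D.R) : D.refl α β ∈ D.R :=
  D.refl_mem α hα β hβ

lemma refl_self {α : X} (hα : α ∈ D.R) : D.refl α α = -α := by
  rw [refl_apply, D.pair_self α hα]
  module

lemma neg_mem_R {α : X} (hα : α ∈ D.R) : -α ∈ D.R :=
  D.refl_self hα ▸ D.refl_apply_mem hα hα

def reflHom (α : X) : X →+ X where
  toFun := D.refl α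
  map_zero' := by simp [refl_apply]
  map_add' x y := by
    simp only [refl_apply, map_add, AddMonoidHom.add_apply, add_smul]
    abel

lemma refl_sub (α x y : X) : D.refl α (x - y) = D.refl α x - D.refl α y :=
  map_sub (D.reflHom α) x y

lemma refl_zsmul (α : X) (n : ℤ) (x : X) : D.refl α (n • x) = n • D.refl α x :=
  map_zsmul (D.reflHom α) n x

lemma pair_refl (α x : X) (y : Y) :
    D.pair (D.refl α x) y = D.pair x y - D.pair x (D.coroot α) * D.pair α y := by
  simp [refl_apply]

lemma eq_of_forall_sub_pair_smul_mem {β γ : X} (hβ : β ∈ D.R)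
    (hγ : D.pair γ (D.coroot β) = 2) (hR : ∀ x ∈ D.R, x - D.pair x (D.coroot β) • γ ∈ D.R) :
    γ = β := by
  -- `s_β` composed with this map is `x ↦ x + ⟨x, β̌⟩ (β - γ)`, whose orbit of `β` is infinite
  -- unless `γ = β`.
  have horbit : ∀ n : ℕ, β + (2 * n : ℤ) • (β - γ) ∈ D.R := by
    intro n
    induction n with
    | zero => simpa using hβ
    | succ n ih =>
      have hpair : D.pair (β + (2 * n : ℤ) • (β - γ)) (D.coroot β) = 2 := by
        simp [D.pair_self β hβ, hγ]
      convert D.refl_apply_mem hβ (hR _ ih) using 1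
      rw [refl_apply, hpair, map_sub, map_zsmul, AddMonoidHom.sub_apply,
        AddMonoidHom.smul_apply, hpair, hγ]
      push_cast
      module
  obtain ⟨n, m, hnm, h⟩ := Finite.exists_ne_map_eq_of_infinite
    (fun n : ℕ => (⟨_, horbit n⟩ : D.R))
  have hzero : (2 * n - 2 * m : ℤ) • (β - γ) = 0 := by
    rw [sub_smul, sub_eq_zero]
    simpa using congrArg Subtype.val h
  have := D.isAddTorsionFree
  rw [IsAddTorsionFree.zsmul_eq_zero_iff_right (by omega), sub_eq_zero] at hzero
  exact hzero.symm

lemma coroot_refl {α β : X} (hα : α ∈ D.R) (hβ : β ∈ D.R) :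
    D.coroot (D.refl α β) = D.coroot β - D.pair α (D.coroot β) • D.coroot α := by
  obtain ⟨γ, hγ, hcoroot⟩ := D.corefl_mem α hα β hβ
  have hpair : ∀ x, D.pair x (D.coroot γ) = D.pair (D.refl α x) (D.coroot β) := by
    intro x
    rw [hcoroot, pair_refl]
    simp only [map_sub, map_zsmul, smul_eq_mul]
    ring
  have hγβ : D.refl α γ = β := by
    refine D.eq_of_forall_sub_pair_smul_mem hβ (by rw [← hpair, D.pair_self γ hγ]) ?_
    intro x hx
    convert D.refl_apply_mem hα (D.refl_apply_mem hγ (D.refl_apply_mem hα hx)) using 1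
    rw [D.refl_apply γ, ← D.refl_involutive hα x, hpair, D.refl_involutive hα x, refl_sub,
      refl_zsmul, D.refl_involutive hα]
  rw [← hcoroot, ← hγβ, D.refl_involutive hα]

lemma pair_refl_coroot_refl {α β : X} (hα : α ∈ D.R) (hβ : β ∈ D.R) (x : X) :
    D.pair (D.refl α x) (D.coroot (D.refl α β)) = D.pair x (D.coroot β) := by
  rw [D.coroot_refl hα hβ, pair_refl]
  simp only [map_sub, map_zsmul, smul_eq_mul, D.pair_self α hα]
  ring

lemma refl_refl_comp {α β : X} (hα : α ∈ D.R) (hβ : β ∈ D.R) :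
    D.refl (D.refl α β) ∘ D.refl α = D.refl α ∘ D.refl β := by
  funext x
  rw [Function.comp_apply, D.refl_apply (D.refl α β), D.pair_refl_coroot_refl hα hβ,
    Function.comp_apply, D.refl_apply β, refl_sub, refl_zsmul]

lemma word_cons (γ : X) (l : List X) : D.word (γ :: l) = D.word l ∘ D.refl γ := rfl

lemma word_append (l₁ l₂ : List X) : D.word (l₁ ++ l₂) = D.word l₂ ∘ D.word l₁ := by
  induction l₁ with
  | nil => rfl
  | cons γ t ih => rw [List.cons_append, word_cons, ih, word_cons, Function.comp_assoc]

lemma word_concat (l : List X) (δ : X) : D.word (l ++ [δ]) = D.refl δ ∘ D.word l :=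
  D.word_append l [δ]

def wordHom (l : List X) : X →+ X := l.foldr (fun α f => f.comp (D.reflHom α)) (.id X)

lemma coe_wordHom (l : List X) : ⇑(D.wordHom l) = D.word l := by
  induction l with
  | nil => rfl
  | cons γ t ih =>
    simp only [wordHom, List.foldr_cons, AddMonoidHom.coe_comp] at ih ⊢
    rw [ih]
    rfl

lemma word_add (l : List X) (x y : X) : D.word l (x + y) = D.word l x + D.word l y := by
  simp only [← coe_wordHom, map_add]

lemma word_neg (l : List X) (x : X) : D.word l (-x) = -D.word l x := by
  simp only [← coe_wordHom, map_neg]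

lemma word_nsmul (l : List X) (n : ℕ) (x : X) : D.word l (n • x) = n • D.word l x := by
  simp only [← coe_wordHom, map_nsmul]

lemma word_apply_mem {l : List X} (hl : ∀ γ ∈ l, γ ∈ D.R) {x : X} (hx : x ∈ D.R) :
    D.word l x ∈ D.R := by
  induction l generalizing x with
  | nil => exact hx
  | cons γ t ih =>
    exact ih (fun γ' h => hl γ' (.tail _ h)) (D.refl_apply_mem (hl γ (.head _)) hx)

lemma word_reverse_apply_word {l : List X} (hl : ∀ γ ∈ l, γ ∈ D.R) (x : X) :
    D.word l.reverse (D.word l x) = x := by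
  induction l generalizing x with
  | nil => rfl
  | cons γ t ih =>
    rw [List.reverse_cons, word_concat, Function.comp_apply, word_cons, Function.comp_apply,
      ih (fun γ' h => hl γ' (.tail _ h)), D.refl_involutive (hl γ (.head _))]

lemma word_apply_word_reverse {l : List X} (hl : ∀ γ ∈ l, γ ∈ D.R) (x : X) :
    D.word l (D.word l.reverse x) = x := by
  simpa using D.word_reverse_apply_word (l := l.reverse) (by simpa using hl) x

lemma refl_word_comp {l : List X} (hl : ∀ γ ∈ l, γ ∈ D.R) {β : X} (hβ : β ∈ D.R) :
    D.refl (D.word l β) ∘ D.word l = D.word l ∘ D.refl β := by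
  induction l generalizing β with
  | nil => rfl
  | cons γ t ih =>
    have hγ := hl γ (.head _)
    rw [word_cons, Function.comp_apply, ← Function.comp_assoc,
      ih (fun γ' h => hl γ' (.tail _ h)) (D.refl_apply_mem hγ hβ), Function.comp_assoc,
      D.refl_refl_comp hγ hβ, Function.comp_assoc]

/-! ### Positive roots and the exchange property -/

def IsPos (x : X) : Prop := ∃ n : X → ℕ, x = ∑ a ∈ D.base, (n a : ℤ) • a

def IsNeg (x : X) : Prop := D.IsPos (-x)

lemma isNeg_neg_iff {x : X} : D.IsNeg (-x) ↔ D.IsPos x := by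
  rw [IsNeg, neg_neg]

lemma coeff_eq_of_sum_smul_eq {f g : X → ℤ}
    (h : ∑ a ∈ D.base, f a • a = ∑ a ∈ D.base, g a • a) {a : X} (ha : a ∈ D.base) :
    f a = g a := by
  have hindep : LinearIndepOn ℤ id (D.base : Set X) := D.base_indep
  have := linearIndepOn_iff'.1 hindep D.base (f - g) subset_rfl
    (by simp [sub_smul, Finset.sum_sub_distrib, h]) a ha
  simpa [sub_eq_zero] using this

lemma coeff_nonneg_of_isPos {f : X → ℤ} (h : D.IsPos (∑ a ∈ D.base, f a • a)) {a : X}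
    (ha : a ∈ D.base) : 0 ≤ f a := by
  obtain ⟨n, hn⟩ := h
  rw [D.coeff_eq_of_sum_smul_eq hn ha]
  positivity

lemma isPos_of_mem_base {δ : X} (hδ : δ ∈ D.base) : D.IsPos δ := by
  classical
  exact ⟨fun a => if a = δ then 1 else 0, by simp [ite_smul, hδ]⟩

section

variable {D}

lemma IsPos.add {x y : X} (hx : D.IsPos x) (hy : D.IsPos y) : D.IsPos (x + y) := by
  obtain ⟨n, rfl⟩ := hx
  obtain ⟨m, rfl⟩ := hy
  exact ⟨n + m, by simp [add_smul, Finset.sum_add_distrib]⟩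

lemma IsPos.nsmul {x : X} (hx : D.IsPos x) (p : ℕ) : D.IsPos (p • x) := by
  obtain ⟨n, rfl⟩ := hx
  refine ⟨p • n, ?_⟩
  simp [Finset.smul_sum, mul_smul]

end

lemma eq_zero_of_isPos_of_isNeg {x : X} (hx : D.IsPos x) (hx' : D.IsNeg x) : x = 0 := by
  obtain ⟨n, rfl⟩ := hx
  have hneg : D.IsPos (∑ a ∈ D.base, (-(n a : ℤ)) • a) := by
    have h : D.IsPos (-∑ a ∈ D.base, (n a : ℤ) • a) := hx'
    simpa [neg_smul, Finset.sum_neg_distrib] using h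
  refine Finset.sum_eq_zero fun a ha => ?_
  have := D.coeff_nonneg_of_isPos hneg ha
  simp [show n a = 0 by omega]

lemma isPos_or_isNeg {x : X} (hx : x ∈ D.R) : D.IsPos x ∨ D.IsNeg x := by
  rcases D.base_span x hx with ⟨n, hn⟩ | ⟨n, hn⟩
  · exact .inl ⟨n, hn⟩
  · exact .inr ⟨n, by rw [hn, neg_neg]⟩

lemma isPos_iff_not_isNeg {x : X} (hx : x ∈ D.R) : D.IsPos x ↔ ¬D.IsNeg x :=
  ⟨fun hp hn => D.ne_zero_of_mem_R hx (D.eq_zero_of_isPos_of_isNeg hp hn),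
    (D.isPos_or_isNeg hx).resolve_right⟩

lemma isPos_refl {δ β : X} (hδ : δ ∈ D.base) (hβ : β ∈ D.R) (hpos : D.IsPos β) (hne : β ≠ δ) :
    D.IsPos (D.refl δ β) := by
  classical
  rw [D.isPos_iff_not_isNeg (D.refl_apply_mem (D.base_sub hδ) hβ)]
  intro hneg
  obtain ⟨n, hn⟩ := hpos
  -- `-s_δ β = ⟨β, δ̌⟩ δ - β` has coefficient `-n a` at each simple root `a ≠ δ`
  have hzero : ∀ a ∈ D.base, a ≠ δ → n a = 0 := by
    intro a ha had
    have hneg' : D.IsPos (∑ b ∈ D.base,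
        ((if b = δ then D.pair β (D.coroot δ) else 0) - n b) • b) := by
      have h : D.IsPos (-D.refl δ β) := hneg
      convert h using 2
      simp only [sub_smul, Finset.sum_sub_distrib, ite_smul, zero_smul, Finset.sum_ite_eq',
        if_pos hδ, ← hn, refl_apply, neg_sub]
    have := D.coeff_nonneg_of_isPos hneg' ha
    rw [if_neg had] at this
    omega
  have hβδ : β = (n δ : ℤ) • δ := by
    rw [hn, Finset.sum_eq_single_of_mem δ hδ fun a ha had => by simp [hzero a ha had]]
  rcases D.isReduced δ (D.base_sub hδ) (n δ) (hβδ ▸ hβ) with h | h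
  · exact hne (by rw [hβδ, h, one_smul])
  · omega

lemma nonneg_of_isPos_smul_add_smul {α δ : X} (hα : α ∈ D.base) (hδ : δ ∈ D.base) (hne : α ≠ δ)
    {p q : ℤ} (h : D.IsPos (p • α + q • δ)) : 0 ≤ p ∧ 0 ≤ q := by
  classical
  have hsum : p • α + q • δ =
      ∑ a ∈ D.base, ((if a = α then p else 0) + (if a = δ then q else 0)) • a := by
    simp [add_smul, Finset.sum_add_distrib, ite_smul, hα, hδ]
  rw [hsum] at h
  have hp := D.coeff_nonneg_of_isPos h hα
  have hq := D.coeff_nonneg_of_isPos h hδ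
  simp only [if_neg hne, if_neg hne.symm, if_true, add_zero, zero_add] at hp hq
  exact ⟨hp, hq⟩

lemma exists_nsmul_add_nsmul_of_mem_R {α δ x : X} (hα : α ∈ D.base) (hδ : δ ∈ D.base)
    (hne : α ≠ δ) (hx : x ∈ D.R) {p q : ℤ} (h : x = p • α + q • δ) :
    ∃ p' q' : ℕ, x = p' • α + q' • δ ∨ x = -(p' • α + q' • δ) := by
  rcases D.isPos_or_isNeg hx with hpos | hneg
  · obtain ⟨hp, hq⟩ := D.nonneg_of_isPos_smul_add_smul hα hδ hne (h ▸ hpos)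
    refine ⟨p.toNat, q.toNat, .inl ?_⟩
    rw [← natCast_zsmul, ← natCast_zsmul, Int.toNat_of_nonneg hp, Int.toNat_of_nonneg hq, h]
  · have : D.IsPos ((-p) • α + (-q) • δ) := by
      rw [neg_smul, neg_smul, ← neg_add, ← h]
      exact hneg
    obtain ⟨hp, hq⟩ := D.nonneg_of_isPos_smul_add_smul hα hδ hne this
    refine ⟨(-p).toNat, (-q).toNat, .inr ?_⟩
    rw [← natCast_zsmul, ← natCast_zsmul, Int.toNat_of_nonneg hp, Int.toNat_of_nonneg hq, h]
    module

lemma eq_zero_or_eq_zero_of_add_mem_base {x y : X} (hx : D.IsPos x) (hy : D.IsPos y)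
    (hxy : x + y ∈ D.base) : x = 0 ∨ y = 0 := by
  classical
  obtain ⟨n, hn⟩ := hx
  obtain ⟨m, hm⟩ := hy
  have hcoeff : ∀ a ∈ D.base, (n a : ℤ) + m a = if a = x + y then 1 else 0 := by
    intro a ha
    refine D.coeff_eq_of_sum_smul_eq (f := fun a => (n a : ℤ) + m a)
      (g := fun a => if a = x + y then 1 else 0) ?_ ha
    simp only [add_smul, Finset.sum_add_distrib, ← hn, ← hm, ite_smul, one_smul, zero_smul,
      Finset.sum_ite_eq', if_pos hxy]
  by_cases hnβ : n (x + y) = 0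
  · refine .inl (hn.trans (Finset.sum_eq_zero fun a ha => ?_))
    have := hcoeff a ha
    have hna : n a = 0 := by
      split_ifs at this with h
      · rwa [h]
      · omega
    simp [hna]
  · refine .inr (hm.trans (Finset.sum_eq_zero fun a ha => ?_))
    have := hcoeff a ha
    have hma : m a = 0 := by
      split_ifs at this with h
      · rw [h] at this ⊢
        omega
      · omega
    simp [hma]

lemma eq_one_of_nsmul_mem_R {x : X} (hx : x ∈ D.R) {p : ℕ} (h : p • x ∈ D.R) : p = 1 := by
  rw [← natCast_zsmul] at h
  rcases D.isReduced x hx p h with h | h <;> omega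

lemma eq_of_nsmul_add_nsmul_mem_base {x y β : X} (hx : x ∈ D.R) (hy : y ∈ D.R)
    (hxp : D.IsPos x) (hyp : D.IsPos y) (hβ : β ∈ D.base) {p q : ℕ} (h : p • x + q • y = β) :
    (p = 1 ∧ x = β) ∨ (p = 0 ∧ q = 1 ∧ y = β) := by
  have hβR := D.base_sub hβ
  rcases D.eq_zero_or_eq_zero_of_add_mem_base (hxp.nsmul p) (hyp.nsmul q) (h ▸ hβ) with h0 | h0
  · have := D.isAddTorsionFree
    have hp : p = 0 := (nsmul_eq_zero_iff_left (D.ne_zero_of_mem_R hx)).1 h0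
    rw [h0, zero_add] at h
    have hq := D.eq_one_of_nsmul_mem_R hy (h ▸ hβR)
    exact .inr ⟨hp, hq, by simpa [hq] using h⟩
  · rw [h0, add_zero] at h
    have hp := D.eq_one_of_nsmul_mem_R hx (h ▸ hβR)
    exact .inl ⟨hp, by simpa [hp] using h⟩

theorem exchange {l : List X} (hl : ∀ γ ∈ l, γ ∈ D.base) {δ : X} (hδ : δ ∈ D.base)
    (hneg : D.IsNeg (D.word l δ)) :
    ∃ l' : List X, (∀ γ ∈ l', γ ∈ D.base) ∧ l'.length + 1 = l.length ∧
      D.word l' = D.word l ∘ D.refl δ := by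
  classical
  have hδR := D.base_sub hδ
  have hex : ∃ j, D.IsNeg (D.word (l.take j) δ) := ⟨l.length, by rwa [List.take_length]⟩
  obtain ⟨j, hj⟩ : ∃ j, Nat.find hex = j + 1 := by
    refine Nat.exists_eq_add_one_of_ne_zero fun h => ?_
    have h0 := Nat.find_spec hex
    rw [h, List.take_zero] at h0
    exact (D.isPos_iff_not_isNeg hδR).1 (D.isPos_of_mem_base hδ) h0
  have hneg_succ : D.IsNeg (D.word (l.take (j + 1)) δ) := hj ▸ Nat.find_spec hex
  have hnot_neg : ¬D.IsNeg (D.word (l.take j) δ) := Nat.find_min hex (by omega)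
  have hjl : j < l.length := by
    by_contra h
    rw [List.take_of_length_le (by omega), ← List.take_of_length_le (l := l) (i := j) (by omega)]
      at hneg_succ
    exact hnot_neg hneg_succ
  have htake : ∀ γ ∈ l.take j, γ ∈ D.R := fun γ h => D.base_sub (hl γ (List.mem_of_mem_take h))
  have hσR := D.word_apply_mem htake hδR
  -- the first letter of `l` that makes `δ` negative is the image of `δ` under the prefix before it
  have hlj := hl _ (List.getElem_mem hjl)
  have hσ : D.word (l.take j) δ = l[j] := by
    by_contra hne
    have hpos := D.isPos_refl hlj hσR ((D.isPos_iff_not_isNeg hσR).2 hnot_neg) hne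
    rw [List.take_succ_eq_append_getElem hjl, word_concat, Function.comp_apply] at hneg_succ
    exact (D.isPos_iff_not_isNeg (D.refl_apply_mem (D.base_sub hlj) hσR)).1 hpos hneg_succ
  have hcomm : D.word (l.take (j + 1)) = D.word (l.take j) ∘ D.refl δ := by
    rw [List.take_succ_eq_append_getElem hjl, word_concat, ← hσ, D.refl_word_comp htake hδR]
  refine ⟨l.eraseIdx j, fun γ h => hl γ (List.mem_of_mem_eraseIdx h),
    List.length_eraseIdx_add_one hjl, ?_⟩
  calc D.word (l.eraseIdx j) = D.word (l.drop (j + 1)) ∘ D.word (l.take j) := by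
        rw [List.eraseIdx_eq_take_drop_succ, word_append]
    _ = D.word (l.drop (j + 1)) ∘ D.word (l.take (j + 1)) ∘ D.refl δ := by
        rw [hcomm, Function.comp_assoc, (D.refl_involutive hδR).comp_self, Function.comp_id]
    _ = D.word l ∘ D.refl δ := by
        rw [← Function.comp_assoc, ← word_append, List.take_append_drop]

lemma len_le {l : List X} (hl : ∀ γ ∈ l, γ ∈ D.base) : D.len (D.word l) ≤ l.length :=
  Nat.sInf_le ⟨l, hl, rfl, rfl⟩

lemma exists_length_eq_len {l : List X} (hl : ∀ γ ∈ l, γ ∈ D.base) :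
    ∃ l₀ : List X, (∀ γ ∈ l₀, γ ∈ D.base) ∧ l₀.length = D.len (D.word l) ∧
      D.word l₀ = D.word l :=
  Nat.sInf_mem (s := {n | ∃ l₀ : List X, (∀ γ ∈ l₀, γ ∈ D.base) ∧ l₀.length = n ∧
    D.word l₀ = D.word l}) ⟨_, l, hl, rfl, rfl⟩

lemma len_comp_refl_lt {l : List X} (hl : ∀ γ ∈ l, γ ∈ D.base) {δ : X} (hδ : δ ∈ D.base)
    (hneg : D.IsNeg (D.word l δ)) : D.len (D.word l ∘ D.refl δ) < D.len (D.word l) := by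
  obtain ⟨l₀, hl₀, hlen, hw⟩ := D.exists_length_eq_len hl
  obtain ⟨l', hl', hlen', hw'⟩ := D.exchange hl₀ hδ (hw ▸ hneg)
  have := D.len_le hl'
  rw [hw', hw] at this
  omega

lemma exists_isNeg_of_ne_id {l : List X} (hl : ∀ γ ∈ l, γ ∈ D.base) (hne : D.word l ≠ id) :
    ∃ δ ∈ D.base, D.IsNeg (D.word l δ) := by
  obtain ⟨l₀, hl₀, hlen, hw⟩ := D.exists_length_eq_len hl
  rcases l₀ with _ | ⟨γ, t⟩
  · exact absurd hw.symm hne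
  · have hγ := hl₀ γ (.head _)
    have ht : ∀ β ∈ t, β ∈ D.base := fun β h => hl₀ β (.tail _ h)
    refine ⟨γ, hγ, ?_⟩
    rw [← hw, word_cons, Function.comp_apply, D.refl_self (D.base_sub hγ), word_neg,
      isNeg_neg_iff, D.isPos_iff_not_isNeg
        (D.word_apply_mem (fun β h => D.base_sub (ht β h)) (D.base_sub hγ))]
    -- otherwise `word t ∘ s_γ = word l` would be shorter than the reduced word `γ :: t`
    intro htneg
    have hlt := D.len_comp_refl_lt ht hγ htneg
    rw [← word_cons, hw] at hlt
    have := D.len_le ht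
    simp only [List.length_cons] at hlen
    omega

/-! ### Conjugate simple roots -/

lemma exists_mem_closure_coe_eq_word {T : Set (AddAut X)} {l : List X}
    (hl : ∀ γ ∈ l, ∃ s ∈ T, ⇑s = D.refl γ) : ∃ g ∈ Subgroup.closure T, ⇑g = D.word l := by
  induction l with
  | nil => exact ⟨1, one_mem _, rfl⟩
  | cons γ t ih =>
    obtain ⟨g, hg, hgw⟩ := ih fun β hβ => hl β (.tail _ hβ)
    obtain ⟨s, hs, hsγ⟩ := hl γ (.head _)
    exact ⟨g * s, mul_mem hg (Subgroup.subset_closure hs), by rw [word_cons, ← hgw, ← hsγ]; rfl⟩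

lemma odd_orderOf_reflAut_mul_reflAut {α δ : X} (hα : α ∈ D.R) (hδ : δ ∈ D.R) {t : List X}
    (ht : ∀ γ ∈ t, γ = α ∨ γ = δ) (h : D.word t α = δ) :
    Odd (orderOf (D.reflAut hα * D.reflAut hδ)) := by
  have hsq : ∀ {β : X} (hβ : β ∈ D.R), D.reflAut hβ * D.reflAut hβ = 1 :=
    fun hβ => AddEquiv.ext (D.refl_involutive hβ)
  have htR : ∀ γ ∈ t, γ ∈ D.R := fun γ hγ => by rcases ht γ hγ with rfl | rfl <;> assumption
  obtain ⟨g, hg, hgw⟩ := D.exists_mem_closure_coe_eq_word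
    (T := {D.reflAut hα, D.reflAut hδ}) fun γ hγ => by
      rcases ht γ hγ with rfl | rfl
      exacts [⟨_, .inl rfl, rfl⟩, ⟨_, .inr rfl, rfl⟩]
  refine odd_orderOf_mul_of_mul_mul_inv_eq (hsq hα) (hsq hδ) hg (mul_inv_eq_of_eq_mul ?_)
  have hcomm := D.refl_word_comp htR hα
  rw [h] at hcomm
  ext x
  change g (D.refl α x) = D.refl δ (g x)
  rw [hgw]
  exact (congrFun hcomm x).symm

lemma exists_word_apply_eq_add {α δ : X} {t : List X} (ht : ∀ γ ∈ t, γ = α ∨ γ = δ) (x : X) :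
    ∃ m n : ℤ, D.word t x = x + m • α + n • δ := by
  induction t generalizing x with
  | nil => exact ⟨0, 0, by simp [word]⟩
  | cons γ s ih =>
    obtain ⟨m, n, h⟩ := ih (fun β hβ => ht β (.tail _ hβ)) (D.refl γ x)
    rw [word_cons, Function.comp_apply, h, refl_apply]
    rcases ht γ (.head _) with rfl | rfl
    · exact ⟨m - D.pair x (D.coroot γ), n, by module⟩
    · exact ⟨m, n - D.pair x (D.coroot γ), by module⟩

def IsOddCompatible {M : Type*} (c : X → M) : Prop :=
  ∀ δ, ∀ hδ : δ ∈ D.base, ∀ ε, ∀ hε : ε ∈ D.base,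
    Odd (orderOf (D.reflAut (D.base_sub hδ) * D.reflAut (D.base_sub hε))) → c δ = c ε

lemma exists_dihedral_coset_rep {l : List X} (hl : ∀ γ ∈ l, γ ∈ D.base) {α δ : X}
    (hα : α ∈ D.base) (hδ : δ ∈ D.base) (hδneg : D.IsNeg (D.word l δ)) :
    ∃ t : List X, (∀ γ ∈ t, γ = α ∨ γ = δ) ∧ D.len (D.word (t ++ l)) < D.len (D.word l) ∧
      ∀ ε, ε = α ∨ ε = δ → D.IsPos (D.word (t ++ l) ε) := by
  let S : Set (List X) := {t | ∀ γ ∈ t, γ = α ∨ γ = δ}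
  let f : List X → ℕ := fun t => D.len (D.word (t ++ l))
  have hS : S.Nonempty := ⟨[], by simp [S]⟩
  set t := Function.argminOn f S hS
  have ht : ∀ γ ∈ t, γ = α ∨ γ = δ := Function.argminOn_mem f S hS
  have hmin : ∀ s ∈ S, f t ≤ f s := fun s hs => Function.argminOn_le f S hs
  have hmem : ∀ {ε}, ε = α ∨ ε = δ → ε ∈ D.base := by rintro _ (rfl | rfl) <;> assumption
  have htl : ∀ γ ∈ t ++ l, γ ∈ D.base := by
    simp only [List.mem_append]
    rintro γ (h | h)
    exacts [hmem (ht γ h), hl γ h]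
  refine ⟨t, ht, (hmin [δ] (by simp [S])).trans_lt (D.len_comp_refl_lt hl hδ hδneg), ?_⟩
  intro ε hε
  rw [D.isPos_iff_not_isNeg (D.word_apply_mem (fun γ h => D.base_sub (htl γ h))
    (D.base_sub (hmem hε)))]
  intro hneg
  exact absurd (hmin (ε :: t) (by simpa [S, hε] using ht))
    (not_le.2 (D.len_comp_refl_lt htl (hmem hε) hneg))

theorem apply_eq_of_word_apply_eq {M : Type*} {c : X → M} (hc : D.IsOddCompatible c)
    {l : List X} (hl : ∀ γ ∈ l, γ ∈ D.base) {α β : X} (hα : α ∈ D.base) (hβ : β ∈ D.base)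
    (hw : D.word l α = β) : c α = c β := by
  induction hn : D.len (D.word l) using Nat.strong_induction_on generalizing l α β with
  | _ n ih =>
  subst hn
  by_cases hid : D.word l = id
  · rw [← hw, hid, id]
  obtain ⟨δ, hδ, hδneg⟩ := D.exists_isNeg_of_ne_id hl hid
  have hαδ : α ≠ δ := by
    rintro rfl
    rw [hw] at hδneg
    exact (D.isPos_iff_not_isNeg (D.base_sub hβ)).1 (D.isPos_of_mem_base hβ) hδneg
  -- `w = u v` with `v = word t⁻¹` in the dihedral subgroup `⟨s_α, s_δ⟩` and `u` shorter than `w`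
  obtain ⟨t, ht, hlt, hupos⟩ := D.exists_dihedral_coset_rep hl hα hδ hδneg
  have htR : ∀ γ ∈ t, γ ∈ D.R := fun γ h => by rcases ht γ h with rfl | rfl <;> exact D.base_sub ‹_›
  have htl : ∀ γ ∈ t ++ l, γ ∈ D.base := fun γ h => (List.mem_append.1 h).elim
    (fun h => by rcases ht γ h with rfl | rfl <;> assumption) (hl γ)
  set u := D.word (t ++ l)
  have huR : ∀ {ε}, ε ∈ D.base → u ε ∈ D.R := fun hε =>
    D.word_apply_mem (fun γ h => D.base_sub (htl γ h)) (D.base_sub hε)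
  have hwu : D.word l α = u (D.word t.reverse α) := by
    simp only [u, word_append, Function.comp_apply, D.word_apply_word_reverse htR]
  obtain ⟨m, n, hv⟩ := D.exists_word_apply_eq_add (t := t.reverse) (by simpa using ht) α
  obtain ⟨p, q, hpq | hpq⟩ := D.exists_nsmul_add_nsmul_of_mem_R hα hδ hαδ
    (D.word_apply_mem (by simpa using htR) (D.base_sub hα)) (p := 1 + m) (q := n)
    (hv.trans (by module))
  · have hβu : p • u α + q • u δ = β := by
      simp only [← hw, hwu, hpq, u, word_add, word_nsmul]
    rcases D.eq_of_nsmul_add_nsmul_mem_base (huR hα) (huR hδ) (hupos α (.inl rfl))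
      (hupos δ (.inr rfl)) hβ hβu with ⟨-, huα⟩ | ⟨hp, hq, huδ⟩
    · exact ih _ hlt htl hα hβ huα rfl
    · -- `v α = δ`, so `s_α` and `s_δ` are conjugate in the dihedral subgroup
      have hvα : D.word t.reverse α = δ := by rw [hpq, hp, hq]; simp
      rw [hc α hα δ hδ (D.odd_orderOf_reflAut_mul_reflAut _ _ (by simpa using ht) hvα)]
      exact ih _ hlt htl hδ hβ huδ rfl
  · have hβneg : D.IsNeg β := by
      simp only [← hw, hwu, hpq, u, word_neg, IsNeg, neg_neg, word_add, word_nsmul]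
      exact ((hupos α (.inl rfl)).nsmul p).add ((hupos δ (.inr rfl)).nsmul q)
    exact absurd hβneg ((D.isPos_iff_not_isNeg (D.base_sub hβ)).1 (D.isPos_of_mem_base hβ))

/-! ### The Weyl group and the extended parameters -/

def weylGroup : Subgroup (AddAut X) :=
  Subgroup.closure {w | ∃ δ ∈ D.base, ⇑w = D.refl δ}

lemma reflAut_mem_weylGroup {δ : X} (hδ : δ ∈ D.base) : D.reflAut (D.base_sub hδ) ∈ D.weylGroup :=
  Subgroup.subset_closure ⟨δ, hδ, rfl⟩

lemma exists_mem_weylGroup_coe_eq_word {l : List X} (hl : ∀ γ ∈ l, γ ∈ D.base) :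
    ∃ g ∈ D.weylGroup, ⇑g = D.word l :=
  D.exists_mem_closure_coe_eq_word fun γ hγ =>
    ⟨D.reflAut (D.base_sub (hl γ hγ)), ⟨γ, hl γ hγ, rfl⟩, rfl⟩

lemma coe_inv_eq_word_reverse {g : AddAut X} {l : List X} (hl : ∀ γ ∈ l, γ ∈ D.R)
    (hg : ⇑g = D.word l) : ⇑g⁻¹ = D.word l.reverse := by
  funext x
  change g.symm x = _
  rw [AddEquiv.symm_apply_eq, hg, D.word_apply_word_reverse hl]

lemma exists_word_of_mem_weylGroup {g : AddAut X} (hg : g ∈ D.weylGroup) :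
    ∃ l : List X, (∀ γ ∈ l, γ ∈ D.base) ∧ ⇑g = D.word l := by
  induction hg using Subgroup.closure_induction with
  | mem g hg =>
    obtain ⟨δ, hδ, hgδ⟩ := hg
    exact ⟨[δ], by simpa using hδ, hgδ⟩
  | one => exact ⟨[], by simp, rfl⟩
  | mul g₁ g₂ _ _ h₁ h₂ =>
    obtain ⟨l₁, hl₁, hg₁⟩ := h₁
    obtain ⟨l₂, hl₂, hg₂⟩ := h₂
    refine ⟨l₂ ++ l₁, fun γ h => (List.mem_append.1 h).elim (hl₂ γ) (hl₁ γ), ?_⟩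
    rw [word_append, ← hg₁, ← hg₂]
    rfl
  | inv g _ h =>
    obtain ⟨l, hl, hgl⟩ := h
    exact ⟨l.reverse, by simpa using hl,
      D.coe_inv_eq_word_reverse (fun γ hγ => D.base_sub (hl γ hγ)) hgl⟩

lemma apply_mem_R_iff {g : AddAut X} (hg : g ∈ D.weylGroup) {x : X} : g x ∈ D.R ↔ x ∈ D.R := by
  obtain ⟨l, hl, hgl⟩ := D.exists_word_of_mem_weylGroup hg
  have hlR : ∀ γ ∈ l, γ ∈ D.R := fun γ h => D.base_sub (hl γ h)
  rw [hgl]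
  refine ⟨fun h => ?_, D.word_apply_mem hlR⟩
  rw [← D.word_reverse_apply_word hlR x]
  exact D.word_apply_mem (by simpa using hlR) h

section

variable {M : Type*} [Zero M]

open Classical in
/-- `c` transported from the simple roots to their `W`-orbit (and `0` off it); the choice of the
simple root does not matter when `c` is odd-compatible, by `apply_eq_of_word_apply_eq`. -/
noncomputable def rootParam (c : X → M) (x : X) : M :=
  if h : ∃ α ∈ D.base, ∃ g ∈ D.weylGroup, g α = x then c h.choose else 0

lemma rootParam_congr (c : X → M) {x y : X}
    (h : ∀ α ∈ D.base, (∃ g ∈ D.weylGroup, g α = x) ↔ ∃ g ∈ D.weylGroup, g α = y) :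
    D.rootParam c x = D.rootParam c y := by
  have hxy : (fun α => α ∈ D.base ∧ ∃ g ∈ D.weylGroup, g α = x) =
      fun α => α ∈ D.base ∧ ∃ g ∈ D.weylGroup, g α = y :=
    funext fun α => propext (and_congr_right (h α))
  have hchoose : ∀ (p q : X → Prop) (hp : ∃ α, p α) (hq : ∃ α, q α), p = q →
      hp.choose = hq.choose := by
    rintro p q hp hq rfl
    rfl
  unfold rootParam
  split_ifs with hx hy hy
  · rw [hchoose _ _ hx hy hxy]
  · exact absurd (hxy ▸ hx) hy
  · exact absurd (hxy ▸ hy) hx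
  · rfl

lemma rootParam_apply (c : X → M) {g : AddAut X} (hg : g ∈ D.weylGroup) (x : X) :
    D.rootParam c (g x) = D.rootParam c x := by
  refine D.rootParam_congr c fun α _ => ⟨?_, ?_⟩
  · rintro ⟨g', hg', h⟩
    exact ⟨g⁻¹ * g', mul_mem (inv_mem hg) hg', by simp [h]⟩
  · rintro ⟨g', hg', h⟩
    exact ⟨g * g', mul_mem hg hg', by simp [h]⟩

lemma rootParam_neg (c : X → M) (x : X) : D.rootParam c (-x) = D.rootParam c x := by
  have key : ∀ α ∈ D.base, ∀ y : X, (∃ g ∈ D.weylGroup, g α = y) →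
      ∃ g ∈ D.weylGroup, g α = -y := by
    rintro α hα y ⟨g, hg, rfl⟩
    refine ⟨g * D.reflAut (D.base_sub hα), mul_mem hg (D.reflAut_mem_weylGroup hα), ?_⟩
    rw [AddAut.mul_apply', ← map_neg]
    exact congrArg g (D.refl_self (D.base_sub hα))
  exact D.rootParam_congr c fun α hα =>
    ⟨fun h => by simpa using key α hα _ h, key α hα x⟩

lemma rootParam_apply_of_mem_base {c : X → M} (hc : D.IsOddCompatible c) {g : AddAut X}
    (hg : g ∈ D.weylGroup) {α : X} (hα : α ∈ D.base) : D.rootParam c (g α) = c α := by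
  have h : ∃ α' ∈ D.base, ∃ g' ∈ D.weylGroup, g' α' = g α := ⟨α, hα, g, hg, rfl⟩
  rw [rootParam, dif_pos h]
  obtain ⟨hα', g', hg', hgα⟩ := h.choose_spec
  obtain ⟨l, hl, hgl⟩ := D.exists_word_of_mem_weylGroup (mul_mem (inv_mem hg) hg')
  exact D.apply_eq_of_word_apply_eq hc hl hα' hα (by rw [← hgl]; simp [hgα])

lemma rootParam_of_mem_base {c : X → M} (hc : D.IsOddCompatible c) {α : X} (hα : α ∈ D.base) :
    D.rootParam c α = c α :=
  D.rootParam_apply_of_mem_base hc (one_mem _) hα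

lemma rootParam_word {c : X → M} (hc : D.IsOddCompatible c) {l : List X}
    (hl : ∀ γ ∈ l, γ ∈ D.base) {α : X} (hα : α ∈ D.base) : D.rootParam c (D.word l α) = c α := by
  obtain ⟨g, hg, hgl⟩ := D.exists_mem_weylGroup_coe_eq_word hl
  rw [← hgl, D.rootParam_apply_of_mem_base hc hg hα]

end

/-! ### Parity of inversions -/

open Classical in
noncomputable def posRoots : Finset X := D.R.filter D.IsPos

lemma mem_posRoots {x : X} : x ∈ D.posRoots ↔ x ∈ D.R ∧ D.IsPos x := by
  classical
  simp [posRoots]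

open Classical in
noncomputable def absRoot (x : X) : X := if D.IsPos x then x else -x

lemma absRoot_of_isPos {x : X} (h : D.IsPos x) : D.absRoot x = x := if_pos h

lemma absRoot_of_not_isPos {x : X} (h : ¬D.IsPos x) : D.absRoot x = -x := if_neg h

lemma absRoot_eq_or (x : X) : D.absRoot x = x ∨ D.absRoot x = -x := by
  unfold absRoot
  split_ifs <;> simp

lemma absRoot_mem_posRoots {x : X} (hx : x ∈ D.R) : D.absRoot x ∈ D.posRoots := by
  rw [mem_posRoots]
  by_cases h : D.IsPos x
  · rw [D.absRoot_of_isPos h]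
    exact ⟨hx, h⟩
  · rw [D.absRoot_of_not_isPos h]
    exact ⟨D.neg_mem_R hx, (D.isPos_or_isNeg hx).resolve_left h⟩

lemma absRoot_neg {x : X} (hx : x ∈ D.R) : D.absRoot (-x) = D.absRoot x := by
  by_cases h : D.IsPos x
  · rw [D.absRoot_of_isPos h, D.absRoot_of_not_isPos, neg_neg]
    rwa [← IsNeg, ← D.isPos_iff_not_isNeg hx]
  · rw [D.absRoot_of_not_isPos h, D.absRoot_of_isPos ((D.isPos_or_isNeg hx).resolve_left h)]

lemma absRoot_apply_absRoot (g : AddAut X) {x : X} (hx : g x ∈ D.R) :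
    D.absRoot (g (D.absRoot x)) = D.absRoot (g x) := by
  rcases D.absRoot_eq_or x with h | h <;> rw [h]
  rw [map_neg, D.absRoot_neg hx]

lemma sum_posRoots_absRoot_apply {M : Type*} [AddCommMonoid M] {g : AddAut X}
    (hg : ∀ x, g x ∈ D.R ↔ x ∈ D.R) (f : X → M) :
    ∑ γ ∈ D.posRoots, f (D.absRoot (g γ)) = ∑ ε ∈ D.posRoots, f ε := by
  -- `γ ↦ |g γ|` permutes the positive roots, with inverse `ε ↦ |g⁻¹ ε|`
  have hg' : ∀ x, g⁻¹ x ∈ D.R ↔ x ∈ D.R := fun x => by rw [← hg, AddAut.apply_inv_apply]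
  have hinv : ∀ {h : AddAut X}, (∀ x, h x ∈ D.R ↔ x ∈ D.R) → ∀ {h' : AddAut X},
      (∀ x, h' (h x) = x) → ∀ γ ∈ D.posRoots, D.absRoot (h' (D.absRoot (h γ))) = γ := by
    intro h hh h' hh' γ hγ
    obtain ⟨hγR, hγ⟩ := D.mem_posRoots.1 hγ
    rw [D.absRoot_apply_absRoot h' (by rwa [hh']), hh', D.absRoot_of_isPos hγ]
  refine Finset.sum_nbij' (fun γ => D.absRoot (g γ)) (fun ε => D.absRoot (g⁻¹ ε)) ?_ ?_
    (hinv hg (AddAut.inv_apply_apply g)) (hinv hg' (AddAut.apply_inv_apply g)) fun _ _ => rfl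
  · exact fun γ hγ => D.absRoot_mem_posRoots ((hg γ).2 (D.mem_posRoots.1 hγ).1)
  · exact fun ε hε => D.absRoot_mem_posRoots ((hg' ε).2 (D.mem_posRoots.1 hε).1)

open Classical in
noncomputable def inversionParity (P : X → Prop) (w : X → X) : ZMod 2 :=
  ∑ γ ∈ D.posRoots, if P γ ∧ D.IsNeg (w γ) then 1 else 0

lemma inversionParity_id (P : X → Prop) : D.inversionParity P id = 0 := by
  refine Finset.sum_eq_zero fun γ hγ => if_neg fun h => ?_
  obtain ⟨hγR, hγ⟩ := D.mem_posRoots.1 hγ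
  exact (D.isPos_iff_not_isNeg hγR).1 hγ h.2

open Classical in
lemma inversionParity_refl (P : X → Prop) {δ : X} (hδ : δ ∈ D.base) :
    D.inversionParity P (D.refl δ) = if P δ then 1 else 0 := by
  have hδR := D.base_sub hδ
  unfold inversionParity
  rw [Finset.sum_eq_single_of_mem δ (D.mem_posRoots.2 ⟨hδR, D.isPos_of_mem_base hδ⟩)]
  · simp [D.refl_self hδR, D.isNeg_neg_iff, D.isPos_of_mem_base hδ]
  · intro γ hγ hne
    obtain ⟨hγR, hγ⟩ := D.mem_posRoots.1 hγ
    exact if_neg fun h => (D.isPos_iff_not_isNeg (D.refl_apply_mem hδR hγR)).1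
      (D.isPos_refl hδ hγR hγ hne) h.2

theorem inversionParity_mul {P : X → Prop} (hP : ∀ x, P (-x) ↔ P x) {g₁ g₂ : AddAut X}
    (hg₁ : ∀ x ∈ D.R, g₁ x ∈ D.R) (hg₂ : ∀ x, g₂ x ∈ D.R ↔ x ∈ D.R) :
    D.inversionParity P ⇑(g₁ * g₂) =
      D.inversionParity P ⇑g₂ + D.inversionParity (P ∘ ⇑g₂⁻¹) ⇑g₁ := by
  classical
  -- `g₁ g₂ γ` is negative iff exactly one of `g₂ γ` and `g₁ |g₂ γ|` is
  have hterm : ∀ γ ∈ D.posRoots, (if P γ ∧ D.IsNeg ((g₁ * g₂) γ) then 1 else 0 : ZMod 2) =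
      (if P γ ∧ D.IsNeg (g₂ γ) then 1 else 0) +
        if P γ ∧ D.IsNeg (g₁ (D.absRoot (g₂ γ))) then 1 else 0 := by
    intro γ hγ
    have hR := (hg₂ γ).2 (D.mem_posRoots.1 hγ).1
    rw [AddAut.mul_apply']
    by_cases hpos : D.IsPos (g₂ γ)
    · rw [D.absRoot_of_isPos hpos, if_neg (show ¬(P γ ∧ D.IsNeg (g₂ γ)) from
        fun h => (D.isPos_iff_not_isNeg hR).1 hpos h.2), zero_add]
    · have hneg := (D.isPos_or_isNeg hR).resolve_left hpos
      rw [D.absRoot_of_not_isPos hpos, map_neg, D.isNeg_neg_iff,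
        D.isPos_iff_not_isNeg (hg₁ _ hR)]
      by_cases hPγ : P γ <;> by_cases h : D.IsNeg (g₁ (g₂ γ)) <;>
        simp [hPγ, h, hneg, (by decide : (1 + 1 : ZMod 2) = 0)]
  have hP' : ∀ γ ∈ D.posRoots, (P γ ↔ (P ∘ ⇑g₂⁻¹) (D.absRoot (g₂ γ))) := by
    intro γ _
    rcases D.absRoot_eq_or (g₂ γ) with h | h <;> simp [h, hP]
  unfold inversionParity
  rw [Finset.sum_congr rfl hterm, Finset.sum_add_distrib,
    ← D.sum_posRoots_absRoot_apply hg₂ fun ε => if (P ∘ ⇑g₂⁻¹) ε ∧ D.IsNeg (g₁ ε) then 1 else 0]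
  congr 1
  exact Finset.sum_congr rfl fun γ hγ => by simp only [hP' γ hγ]

open Classical in
lemma sum_ite_eq_inversionParity {P : X → Prop} (hP : ∀ x, P (-x) ↔ P x) {m : ℕ}
    (a : Fin m → X) (ha : ∀ i, a i ∈ D.base) :
    ∑ i : Fin m, (if P (D.word ((List.ofFn a).take i).reverse (a i)) then 1 else 0 : ZMod 2) =
      D.inversionParity P (D.word (List.ofFn a)) := by
  induction m with
  | zero => simp [word, inversionParity_id]
  | succ m ih =>
    set l := List.ofFn fun i : Fin m => a i.castSucc
    have hl : ∀ γ ∈ l, γ ∈ D.base := by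
      simpa [l, List.mem_ofFn] using fun i : Fin m => ha i.castSucc
    have hlR : ∀ γ ∈ l, γ ∈ D.R := fun γ h => D.base_sub (hl γ h)
    have hδ := ha (Fin.last m)
    obtain ⟨g, hgW, hgl⟩ := D.exists_mem_weylGroup_coe_eq_word hl
    have hsplit : List.ofFn a = l ++ [a (Fin.last m)] := by
      rw [List.ofFn_succ', List.concat_eq_append]
    have hword : D.word (List.ofFn a) = ⇑(D.reflAut (D.base_sub hδ) * g) := by
      rw [hsplit, word_concat, ← hgl]
      rfl
    rw [Fin.sum_univ_castSucc, hword, D.inversionParity_mul hP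
      (fun x hx => D.refl_apply_mem (D.base_sub hδ) hx) (fun x => D.apply_mem_R_iff hgW), hgl,
      ← ih (fun i => a i.castSucc) (fun i => ha _)]
    congr 1
    · refine Finset.sum_congr rfl fun i _ => ?_
      rw [hsplit, List.take_append_of_le_length (by simp [l])]
      rfl
    · rw [show ⇑(D.reflAut (D.base_sub hδ)) = D.refl (a (Fin.last m)) from rfl,
        D.inversionParity_refl _ hδ, Function.comp_apply, D.coe_inv_eq_word_reverse hlR hgl,
        hsplit, Fin.val_last, List.take_left' (by simp [l])]

/-! ### Critical roots of a weight -/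

section

variable {A : Type*} [AddCommGroup A]

def IsCritical (c : X → A) (μ : X →+ A) (x : X) : Prop :=
  μ x = D.rootParam c x ∨ μ x = -D.rootParam c x

lemma isCritical_neg (c : X → A) (μ : X →+ A) (x : X) :
    D.IsCritical c μ (-x) ↔ D.IsCritical c μ x := by
  simp only [IsCritical, map_neg, D.rootParam_neg, neg_eq_iff_eq_neg, neg_neg]
  exact or_comm

lemma isCritical_comp (c : X → A) (μ : X →+ A) {g : AddAut X} (hg : g ∈ D.weylGroup) :
    D.IsCritical c μ ∘ ⇑g = D.IsCritical c (μ.comp g.toAddMonoidHom) := by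
  funext x
  simp [IsCritical, D.rootParam_apply c hg]

lemma comp_inv_eq_of_forall_apply_eq {μ : X →+ A} {g : AddAut X} (h : ∀ x, μ (g x) = μ x) :
    μ.comp (g⁻¹).toAddMonoidHom = μ := by
  ext x
  simpa using (h (g⁻¹ x)).symm

theorem inversionParity_isCritical_mul (c : X → A) (μ : X →+ A) {g₁ g₂ : AddAut X}
    (hg₁ : g₁ ∈ D.weylGroup) (hg₂ : g₂ ∈ D.weylGroup) :
    D.inversionParity (D.IsCritical c μ) ⇑(g₁ * g₂) =
      D.inversionParity (D.IsCritical c μ) ⇑g₂ +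
        D.inversionParity (D.IsCritical c (μ.comp (g₂⁻¹).toAddMonoidHom)) ⇑g₁ := by
  rw [D.inversionParity_mul (D.isCritical_neg c μ) (fun x hx => (D.apply_mem_R_iff hg₁).2 hx)
    (fun x => D.apply_mem_R_iff hg₂), D.isCritical_comp c μ (inv_mem hg₂)]

lemma map_eq_zero_of_forall_refl {μ : X →+ A} {δ ω : X} (hω : D.pair ω (D.coroot δ) = 1)
    (hμ : ∀ x, μ (D.refl δ x) = μ x) : μ δ = 0 := by
  have := hμ ω
  rwa [refl_apply, hω, one_smul, map_sub, sub_eq_self] at this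

theorem inversionParity_eq_zero_of_mem_closure {c : X → A} (hc : D.IsOddCompatible c)
    (hc0 : ∀ δ ∈ D.base, c δ ≠ 0) (hω : ∀ δ ∈ D.base, ∃ ω : X, D.pair ω (D.coroot δ) = 1)
    {μ : X →+ A} {v : AddAut X} (hv : v ∈ Subgroup.closure
      {w : AddAut X | ∃ δ ∈ D.base, ⇑w = D.refl δ ∧ ∀ x, μ (D.refl δ x) = μ x}) :
    D.inversionParity (D.IsCritical c μ) ⇑v = 0 := by
  suffices v ∈ D.weylGroup ∧ (∀ x, μ (v x) = μ x) ∧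
      D.inversionParity (D.IsCritical c μ) ⇑v = 0 from this.2.2
  induction hv using Subgroup.closure_induction with
  | mem w hw =>
    obtain ⟨δ, hδ, hwδ, hμ⟩ := hw
    refine ⟨Subgroup.subset_closure ⟨δ, hδ, hwδ⟩, by rwa [hwδ], ?_⟩
    obtain ⟨ω, hω⟩ := hω δ hδ
    have hμδ := D.map_eq_zero_of_forall_refl hω hμ
    rw [hwδ, D.inversionParity_refl _ hδ, if_neg]
    rw [IsCritical, hμδ, D.rootParam_of_mem_base hc hδ, eq_comm, eq_comm (a := 0),
      neg_eq_zero, or_self]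
    exact hc0 δ hδ
  | one => exact ⟨one_mem _, fun _ => rfl, D.inversionParity_id _⟩
  | mul v₁ v₂ _ _ h₁ h₂ =>
    refine ⟨mul_mem h₁.1 h₂.1, fun x => by rw [AddAut.mul_apply', h₁.2.1, h₂.2.1], ?_⟩
    rw [D.inversionParity_isCritical_mul c μ h₁.1 h₂.1, comp_inv_eq_of_forall_apply_eq h₂.2.1,
      h₁.2.2, h₂.2.2, add_zero]
  | inv v _ h =>
    have hμ : ∀ x, μ (v⁻¹ x) = μ x := fun x => by rw [← h.2.1 (v⁻¹ x), AddAut.apply_inv_apply]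
    refine ⟨inv_mem h.1, hμ, ?_⟩
    have := D.inversionParity_isCritical_mul c μ h.1 (inv_mem h.1)
    rw [mul_inv_cancel, comp_inv_eq_of_forall_apply_eq hμ, h.2.2, add_zero] at this
    rw [← this]
    exact D.inversionParity_id _

theorem inversionParity_eq_zero_of_parabolic {k : Type*} [Field k] {c : X → k}
    (hc : D.IsOddCompatible c) (hc0 : ∀ δ ∈ D.base, c δ ≠ 0)
    (hω : ∀ δ ∈ D.base, ∃ ω : X, D.pair ω (D.coroot δ) = 1) {lam : X →+ k} {u : AddAut X}
    (hu : u ∈ D.weylGroup)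
    (hpar : D.weylGroup ⊓ addCharStabilizer (lam.comp (AddEquiv.toAddMonoidHom u⁻¹)) =
      Subgroup.closure {w : AddAut X | ∃ δ ∈ D.base, ⇑w = D.refl δ ∧
        ∀ x : X, lam (u⁻¹ (D.refl δ x)) = lam (u⁻¹ x)})
    {g : AddAut X} (hg : g ∈ D.weylGroup) (hfix : ∀ x, lam (g x) = lam x) :
    D.inversionParity (D.IsCritical c lam) ⇑g = 0 := by
  set μ := lam.comp (AddEquiv.toAddMonoidHom u⁻¹)
  set v := u * g * u⁻¹
  have hv : v ∈ D.weylGroup := mul_mem (mul_mem hu hg) (inv_mem hu)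
  have hvμ : ∀ x, μ (v x) = μ x := fun x => by simp [μ, v, hfix]
  have hv0 : D.inversionParity (D.IsCritical c μ) ⇑v = 0 :=
    D.inversionParity_eq_zero_of_mem_closure hc hc0 hω (hpar ▸ Subgroup.mem_inf.2 ⟨hv, hvμ⟩)
  -- `N_λ(u⁻¹ v u) = N_λ(u) + N_μ(v) + N_μ(u⁻¹)` and `N_λ(u) + N_μ(u⁻¹) = N_λ(u⁻¹ u) = 0`
  have h₁ := D.inversionParity_isCritical_mul c lam (mul_mem (inv_mem hu) hv) hu
  have h₂ := D.inversionParity_isCritical_mul c μ (inv_mem hu) hv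
  have h₃ := D.inversionParity_isCritical_mul c lam (inv_mem hu) hu
  rw [comp_inv_eq_of_forall_apply_eq hvμ] at h₂
  rw [inv_mul_cancel] at h₃
  rw [show u⁻¹ * v * u = g by simp only [v]; group] at h₁
  rw [h₁, h₂, hv0, zero_add, ← h₃]
  exact D.inversionParity_id _

end

end RRDatum

/-- Let `(X,Y,R,Ř,Π)` be a reduced simply connected root datum, `k` a
field, `c : Π → k∖{0}` parameters with `c_α = c_β` whenever `m_{α,β}` is odd, and
`λ ∈ Hom_ℤ(X,k)` a parabolic weight (some `W`-translate of `λ` has stabilizer generated by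
the simple reflections fixing it).  Then for every word `s_{α_m}⋯s_{α_1}` in simple
reflections fixing `λ`, the number of indices `i` with
`λ(s_{α_1}⋯s_{α_{i−1}}(α_i)) = ±c_{α_i}` is even. -/
theorem parabolic_weight_even_degree
    {X Y : Type*} [AddCommGroup X] [AddCommGroup Y] (D : RRDatum X Y)
    -- simple connectedness: the fundamental weights lie in `X`
    (hsc : ∀ δ ∈ D.base, ∃ ω : X,
        (∃ nz : ℤ, nz ≠ 0 ∧ nz • ω ∈ Submodule.span ℤ (↑D.R : Set X)) ∧
        D.pair ω (D.coroot δ) = 1 ∧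
        ∀ ε ∈ D.base, ε ≠ δ → D.pair ω (D.coroot ε) = 0)
    {k : Type*} [Field k]
    -- the parameters `c`:
    (c : X → k) (hc0 : ∀ δ ∈ D.base, c δ ≠ 0)
    (hcodd : ∀ δ, ∀ hδ : δ ∈ D.base, ∀ ε, ∀ hε : ε ∈ D.base,
        Odd (orderOf (D.reflAut (D.base_sub hδ) * D.reflAut (D.base_sub hε))) →
        c δ = c ε)
    -- the Weyl group:
    (W : Subgroup (AddAut X))
    (hW : W = Subgroup.closure {w : AddAut X | ∃ δ ∈ D.base, ⇑w = D.refl δ})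
    -- the weight `λ` and the parabolicity assumption:
    (lam : X →+ k)
    (hpar : ∃ u ∈ W,
        W ⊓ addCharStabilizer (lam.comp (AddEquiv.toAddMonoidHom u⁻¹)) =
          Subgroup.closure {w : AddAut X | ∃ δ ∈ D.base, ⇑w = D.refl δ ∧
            ∀ x : X, lam (u⁻¹ (D.refl δ x)) = lam (u⁻¹ x)}) :
    ∀ (m : ℕ) (a : Fin m → X), (∀ i, a i ∈ D.base) →
      (∀ x : X, lam (D.word (List.ofFn a) x) = lam x) →
      Even (Set.ncard {i : Fin m |
        lam (D.word (((List.ofFn a).take i.val).reverse) (a i)) = c (a i) ∨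
        lam (D.word (((List.ofFn a).take i.val).reverse) (a i)) = - c (a i)}) := by
  classical
  intro m a ha hfix
  subst hW
  obtain ⟨u, hu, hpar⟩ := hpar
  have hl : ∀ γ ∈ List.ofFn a, γ ∈ D.base := by simpa [List.mem_ofFn] using ha
  obtain ⟨g, hg, hgl⟩ := D.exists_mem_weylGroup_coe_eq_word hl
  have hzero := D.inversionParity_eq_zero_of_parabolic hcodd hc0
    (fun δ hδ => (hsc δ hδ).imp fun _ hω => hω.2.1) hu hpar hg (by rw [hgl]; exact hfix)
  rw [hgl, ← D.sum_ite_eq_inversionParity (D.isCritical_neg c lam) a ha] at hzero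
  rw [even_ncard_setOf_iff]
  refine (Finset.sum_congr rfl fun i _ => ?_).trans hzero
  simp only [RRDatum.IsCritical, D.rootParam_word hcodd
    (fun γ h => hl γ (List.mem_of_mem_take (List.mem_reverse.1 h))) (ha i)]
end

section
/- Let (X,Y,R,Ř,Π) be a reduced simply connected root datum and let α, β, γ ∈ Π be distinct simple roots with ⟨α, β̌⟩ = 0 and ⟨α, γ̌⟩ = 0 (so that s_β and s_γ each commute with s_α and fix α). Let k be a field and λ : X → k^× a group homomorphism, with W acting by (w·λ)(x) = λ(w^{−1}x). If s_αs_γ·λ = s_β·λ, then s_α·λ = λ. -/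
/-- Let `α, β, γ` be distinct simple roots of a reduced simply connected
root datum with `⟨α,β̌⟩ = 0 = ⟨α,γ̌⟩`, and let `λ : X → k^×` be a character with the Weyl
group acting by `(w·λ)(x) = λ(w⁻¹x)`. If `s_αs_γ·λ = s_β·λ` then `s_α·λ = λ`. -/
theorem commuting_reflections_force_invariance
    {X Y : Type*} [AddCommGroup X] [AddCommGroup Y] (D : RRDatum X Y)
    {α β γ : X} (hα : α ∈ D.base) (hβ : β ∈ D.base) (hγ : γ ∈ D.base)
    (hαβ : α ≠ β) (hαγ : α ≠ γ) (hβγ : β ≠ γ)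
    (horthβ : D.pair α (D.coroot β) = 0) (horthγ : D.pair α (D.coroot γ) = 0)
    -- simple connectedness: the fundamental weights lie in `X`
    (hsc : ∀ δ ∈ D.base, ∃ ω : X,
        (∃ nz : ℤ, nz ≠ 0 ∧ nz • ω ∈ Submodule.span ℤ (↑D.R : Set X)) ∧
        D.pair ω (D.coroot δ) = 1 ∧
        ∀ ε ∈ D.base, ε ≠ δ → D.pair ω (D.coroot ε) = 0)
    {k : Type*} [Field k]
    (lam : X → kˣ) (hlam : ∀ x y : X, lam (x + y) = lam x * lam y)
    -- `s_αs_γ·λ = s_β·λ`, i.e. `λ∘s_γ∘s_α = λ∘s_β`: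
    (h : ∀ x : X, lam (D.refl γ (D.refl α x)) = lam (D.refl β x)) :
    ∀ x : X, lam (D.refl α x) = lam x := by
  obtain ⟨ω, -, hωα, hωrest⟩ := hsc α hα
  have hωβ := hωrest β hβ (Ne.symm hαβ)
  have hωγ := hωrest γ hγ (Ne.symm hαγ)
  have e1 : D.refl α ω = ω - α := by simp [RRDatum.refl, hωα]
  have e2 : D.refl γ (ω - α) = ω - α := by
    simp [RRDatum.refl, map_sub, hωγ, horthγ]
  have e3 : D.refl β ω = ω := by simp [RRDatum.refl, hωβ]
  have hω := h ω
  rw [e1, e2, e3] at hω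
  have hα1 : lam α = 1 := by
    have h2 : lam (ω - α) * lam α = lam ω := by
      rw [← hlam]; congr 1; abel
    rw [hω] at h2
    exact mul_left_cancel (a := lam ω) (by rw [h2, mul_one])
  let L : X →+ Additive kˣ := AddMonoidHom.mk' (fun x => Additive.ofMul (lam x))
    (by intro x y; exact congrArg Additive.ofMul (hlam x y))
  have hLα : L α = 0 := by
    show Additive.ofMul (lam α) = 0
    rw [hα1]; rfl
  intro x
  show lam (x - D.pair x (D.coroot α) • α) = lam x
  have : L (x - D.pair x (D.coroot α) • α) = L x := by
    rw [map_sub, map_zsmul, hLα, smul_zero, sub_zero]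
  exact congrArg Additive.toMul this
end
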